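/- arXiv:1805.00301 — 11 statements merged into one kernel-verified Lean document; each statement's English description precedes it below -/
import Mathlib

section
/- For a finite p-group G of order p^n, the number of cyclic subgroups of G is at most the number of cyclic subgroups of the elementary abelian group (Z/p)^n; equivalently, α(G) ≤ α((Z/p)^n) = (1 + (p^n - 1)/(p - 1))/p^n. -/
/-- `α(G) = |L₁(G)| / |G|`, where `L₁(G)` is the set of cyclic subgroups of `G`. -/
noncomputable def alpha (G : Type*) [Group G] : ℚ :=
  (Nat.card {H : Subgroup G // IsCyclic H} : ℚ) / (Nat.card G : ℚ)

open Finset Subgroup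

private lemma isCyclic_zpowers'' {G : Type*} [Group G] (g : G) : IsCyclic (zpowers g) := by
  refine ⟨⟨⟨g, mem_zpowers g⟩, ?_⟩⟩
  rintro ⟨x, k, rfl⟩
  exact ⟨k, Subtype.ext (by simp)⟩

private lemma zpowers_of_isCyclic' {G : Type*} [Group G] (H : Subgroup G) (h : IsCyclic H) :
    ∃ g : G, zpowers g = H := by
  obtain ⟨⟨g, hg⟩, hgen⟩ := h.exists_generator
  refine ⟨g, le_antisymm (zpowers_le.mpr hg) fun x hx => ?_⟩
  obtain ⟨k, hk⟩ := hgen ⟨x, hx⟩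
  exact ⟨k, by simpa using congrArg Subtype.val hk⟩

private lemma key_le {p n : ℕ} (hp : p.Prime) {G : Type*} [Group G] [Finite G]
    (hG : Nat.card G = p ^ n) :
    Nat.card {H : Subgroup G // IsCyclic H} ≤ 1 + (p ^ n - 1) / (p - 1) := by
  classical
  have hp2 : 2 ≤ p := hp.two_le
  have : Fintype G := Fintype.ofFinite G
  have hcard : Fintype.card G = p ^ n := by rw [← Nat.card_eq_fintype_card, hG]
  set s : Finset G := Finset.univ.erase 1 with hs
  have hscard : s.card = p ^ n - 1 := by
    rw [hs, Finset.card_erase_of_mem (Finset.mem_univ 1), Finset.card_univ, hcard]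
  set f : G → Subgroup G := fun g => Subgroup.zpowers g with hf
  set t := s.image f with ht
  -- each fiber has at least p - 1 elements
  have hfib : ∀ C ∈ t, p - 1 ≤ (s.filter fun g => f g = C).card := by
    intro C hC
    obtain ⟨g, hgs, hgC⟩ := Finset.mem_image.mp hC
    have hg1 : g ≠ 1 := (Finset.mem_erase.mp hgs).1
    have hdvd : orderOf g ∣ p ^ n := hG ▸ orderOf_dvd_natCard g
    obtain ⟨k, hk, hke⟩ := (Nat.dvd_prime_pow hp).mp hdvd
    have hk0 : k ≠ 0 := by
      rintro rfl
      exact hg1 (orderOf_eq_one_iff.mp (by simpa using hke))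
    have hple : p ≤ orderOf g := hke ▸ Nat.le_self_pow hk0 p
    have hle : (Finset.Ico 1 p).card ≤ (s.filter fun g' => f g' = C).card := by
      apply Finset.card_le_card_of_injOn (fun j => g ^ j)
      · intro j hj
        obtain ⟨hj1, hjp⟩ := Finset.mem_Ico.mp hj
        have hcop : (orderOf g).Coprime j := by
          rw [hke]
          exact (hp.coprime_iff_not_dvd.mpr
            (Nat.not_dvd_of_pos_of_lt (by omega) hjp)).pow_left k
        have hne : g ^ j ≠ 1 := by
          intro h
          have h2 := Nat.le_of_dvd (by omega) (orderOf_dvd_of_pow_eq_one h)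
          omega
        refine Finset.mem_filter.mpr ⟨Finset.mem_erase.mpr ⟨hne, Finset.mem_univ _⟩, ?_⟩
        rw [← hgC]
        apply Subgroup.eq_of_le_of_card_ge
        · exact zpowers_le.mpr (mem_zpowers_iff.mpr ⟨(j : ℤ), by simp⟩)
        · rw [Nat.card_zpowers, Nat.card_zpowers, hcop.orderOf_pow]
      · intro a ha b hb hab
        simp only [Finset.coe_Ico, Set.mem_Ico] at ha hb
        rw [pow_inj_mod, Nat.mod_eq_of_lt (by omega), Nat.mod_eq_of_lt (by omega)] at hab
        exact hab
    simpa using hle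
  have hmul : t.card * (p - 1) ≤ p ^ n - 1 := by
    rw [← hscard,
      Finset.card_eq_sum_card_fiberwise (fun x hx => Finset.mem_image_of_mem f hx)]
    calc t.card * (p - 1) = ∑ _C ∈ t, (p - 1) := by rw [Finset.sum_const, smul_eq_mul]
      _ ≤ ∑ C ∈ t, (s.filter fun g => f g = C).card := Finset.sum_le_sum hfib
  have ht_le : t.card ≤ (p ^ n - 1) / (p - 1) :=
    (Nat.le_div_iff_mul_le (by omega : 0 < p - 1)).mpr hmul
  have hcount : Nat.card {H : Subgroup G // IsCyclic H}
      = (Finset.univ.filter fun H : Subgroup G => IsCyclic H).card := by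
    rw [Nat.card_eq_fintype_card, Fintype.card_subtype]
  have hsub : (Finset.univ.filter fun H : Subgroup G => IsCyclic H) ⊆ insert ⊥ t := by
    intro H hH
    obtain ⟨g, rfl⟩ := zpowers_of_isCyclic' H (Finset.mem_filter.mp hH).2
    by_cases hg : g = 1
    · subst hg
      simp [Subgroup.zpowers_one_eq_bot]
    · exact Finset.mem_insert_of_mem
        (Finset.mem_image_of_mem f (Finset.mem_erase.mpr ⟨hg, Finset.mem_univ g⟩))
  calc Nat.card {H : Subgroup G // IsCyclic H}
      = (Finset.univ.filter fun H : Subgroup G => IsCyclic H).card := hcount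
    _ ≤ (insert (⊥ : Subgroup G) t).card := Finset.card_le_card hsub
    _ ≤ t.card + 1 := Finset.card_insert_le _ _
    _ ≤ (p ^ n - 1) / (p - 1) + 1 := by omega
    _ = 1 + (p ^ n - 1) / (p - 1) := by omega

private lemma key_eq (p n : ℕ) (hp : p.Prime) :
    Nat.card {H : Subgroup (Multiplicative (Fin n → ZMod p)) // IsCyclic H}
      = 1 + (p ^ n - 1) / (p - 1) := by
  classical
  haveI : Fact p.Prime := ⟨hp⟩
  have hp2 : 2 ≤ p := hp.two_le
  set E := Multiplicative (Fin n → ZMod p) with hE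
  have hcard : Fintype.card E = p ^ n := by
    simp [hE, Fintype.card_fun, ZMod.card]
  -- every nonidentity element has order p
  have horder : ∀ x : E, x ≠ 1 → orderOf x = p := by
    intro x hx
    have hxp : x ^ p = 1 := by
      apply Multiplicative.toAdd.injective
      rw [toAdd_pow, toAdd_one]
      funext i
      simp [ZMod.natCast_self]
    have := orderOf_dvd_of_pow_eq_one hxp
    rcases (Nat.dvd_prime hp).mp this with h | h
    · exact absurd (orderOf_eq_one_iff.mp h) hx
    · exact h
  set s : Finset E := Finset.univ.erase 1 with hs
  have hscard : s.card = p ^ n - 1 := by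
    rw [hs, Finset.card_erase_of_mem (Finset.mem_univ 1), Finset.card_univ, hcard]
  set f : E → Subgroup E := fun g => Subgroup.zpowers g with hf
  set t := s.image f with ht
  -- each fiber has exactly p - 1 elements
  have hfib : ∀ C ∈ t, (s.filter fun g => f g = C).card = p - 1 := by
    intro C hC
    obtain ⟨g, hgs, hgC⟩ := Finset.mem_image.mp hC
    have hg1 : g ≠ 1 := (Finset.mem_erase.mp hgs).1
    have hCcard : Nat.card C = p := by
      rw [← hgC]
      show Nat.card (zpowers g) = p
      rw [Nat.card_zpowers, horder g hg1]
    have hmem : ∀ h : E, (h ∈ s ∧ f h = C) ↔ (h ≠ 1 ∧ h ∈ C) := by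
      intro h
      constructor
      · rintro ⟨hhs, rfl⟩
        exact ⟨(Finset.mem_erase.mp hhs).1, mem_zpowers h⟩
      · rintro ⟨h1, hC'⟩
        refine ⟨Finset.mem_erase.mpr ⟨h1, Finset.mem_univ _⟩, ?_⟩
        apply Subgroup.eq_of_le_of_card_ge
        · exact zpowers_le.mpr hC'
        · rw [Nat.card_zpowers, horder h h1, hCcard]
    have hfe : (s.filter fun g' => f g' = C)
        = (Finset.univ.filter fun h : E => h ∈ C).erase 1 := by
      ext h
      simp only [Finset.mem_filter, Finset.mem_erase, Finset.mem_univ, true_and]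
      constructor
      · intro ⟨h1, h2⟩
        have := (hmem h).mp ⟨h1, h2⟩
        exact ⟨this.1, this.2⟩
      · intro ⟨h1, h2⟩
        exact (hmem h).mpr ⟨h1, h2⟩
    rw [hfe, Finset.card_erase_of_mem (by simp [Subgroup.one_mem])]
    have : (Finset.univ.filter fun h : E => h ∈ C).card = Nat.card C := by
      rw [Nat.card_eq_fintype_card, Fintype.card_subtype]
    rw [this, hCcard]
  have hmul : t.card * (p - 1) = p ^ n - 1 := by
    rw [← hscard,
      Finset.card_eq_sum_card_fiberwise (fun x hx => Finset.mem_image_of_mem f hx)]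
    rw [Finset.sum_congr rfl hfib, Finset.sum_const, smul_eq_mul]
  have ht_eq : t.card = (p ^ n - 1) / (p - 1) := by
    rw [← hmul, Nat.mul_div_cancel _ (by omega : 0 < p - 1)]
  have hcount : Nat.card {H : Subgroup E // IsCyclic H}
      = (Finset.univ.filter fun H : Subgroup E => IsCyclic H).card := by
    rw [Nat.card_eq_fintype_card, Fintype.card_subtype]
  have hfeq : (Finset.univ.filter fun H : Subgroup E => IsCyclic H)
      = insert ⊥ t := by
    apply subset_antisymm
    · intro H hH
      obtain ⟨g, rfl⟩ := zpowers_of_isCyclic' H (Finset.mem_filter.mp hH).2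
      by_cases hg : g = 1
      · subst hg
        simp [Subgroup.zpowers_one_eq_bot]
      · exact Finset.mem_insert_of_mem
          (Finset.mem_image_of_mem f (Finset.mem_erase.mpr ⟨hg, Finset.mem_univ g⟩))
    · intro H hH
      rcases Finset.mem_insert.mp hH with h | h
      · subst h
        exact Finset.mem_filter.mpr ⟨Finset.mem_univ _, Bot.isCyclic⟩
      · obtain ⟨g, _, rfl⟩ := Finset.mem_image.mp h
        exact Finset.mem_filter.mpr ⟨Finset.mem_univ _, isCyclic_zpowers'' g⟩
  have hbot : (⊥ : Subgroup E) ∉ t := by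
    intro hb
    obtain ⟨g, hgs, hg⟩ := Finset.mem_image.mp hb
    exact (Finset.mem_erase.mp hgs).1 (Subgroup.zpowers_eq_bot.mp hg)
  rw [hcount, hfeq, Finset.card_insert_of_notMem hbot, ht_eq]
  omega

theorem stmt_0 (p n : ℕ) (hp : p.Prime) (G : Type*) [Group G] [Finite G]
    (hG : Nat.card G = p ^ n) :
    Nat.card {H : Subgroup G // IsCyclic H} ≤
      Nat.card {H : Subgroup (Multiplicative (Fin n → ZMod p)) // IsCyclic H} ∧
    alpha G ≤ alpha (Multiplicative (Fin n → ZMod p)) ∧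
    alpha (Multiplicative (Fin n → ZMod p)) =
      (1 + ((p : ℚ) ^ n - 1) / ((p : ℚ) - 1)) / (p : ℚ) ^ n := by
  haveI : Fact p.Prime := ⟨hp⟩
  have hp2 : 2 ≤ p := hp.two_le
  have hE : Nat.card (Multiplicative (Fin n → ZMod p)) = p ^ n := by
    simp [Nat.card_eq_fintype_card, Fintype.card_fun, ZMod.card]
  have h1 := key_le hp hG
  have h2 := key_eq p n hp
  have hle : Nat.card {H : Subgroup G // IsCyclic H}
      ≤ Nat.card {H : Subgroup (Multiplicative (Fin n → ZMod p)) // IsCyclic H} := by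
    rw [h2]; exact h1
  refine ⟨hle, ?_, ?_⟩
  · unfold alpha
    rw [hG, hE]
    gcongr ?_ / _
    · exact_mod_cast hle
  · unfold alpha
    rw [hE, h2]
    have hdvd : (p - 1) ∣ (p ^ n - 1) := by
      simpa using Nat.sub_dvd_pow_sub_pow p 1 n
    have hpn1 : 1 ≤ p ^ n := Nat.one_le_pow _ _ (by omega)
    have hne : ((p - 1 : ℕ) : ℚ) ≠ 0 := by
      have : ((p - 1 : ℕ) : ℚ) = (p : ℚ) - 1 := by
        push_cast [Nat.cast_sub (by omega : 1 ≤ p)]; ring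
      rw [this]
      have : (2 : ℚ) ≤ (p : ℚ) := by exact_mod_cast hp2
      linarith
    rw [Nat.cast_add, Nat.cast_one, Nat.cast_div hdvd hne]
    rw [Nat.cast_sub (by omega : 1 ≤ p), Nat.cast_sub hpn1]
    push_cast
    ring
end

section
/- If G is a finite abelian group and H ≤ K are subgroups of G, then α(H) ≥ α(K), i.e., the function α is decreasing on the subgroup lattice of a finite abelian group. -/
open Subgroup

section Counting

variable {G : Type*} [Group G]

theorem Subgroup.card_zpowers_eq_totient [Finite G] (C : Subgroup G) [IsCyclic C] :
    Nat.card {g : G // zpowers g = C} = (Nat.card C).totient := by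
  classical
  have : Fintype C := Fintype.ofFinite C
  let e : {g : G // zpowers g = C} ≃ {y : C // orderOf y = Nat.card C} :=
    { toFun := fun g => ⟨⟨g, zpowers_le.mp g.2.le⟩, by
        rw [Subgroup.orderOf_mk, ← Nat.card_zpowers, g.2]⟩
      invFun := fun y => ⟨y.1, eq_of_le_of_card_ge (zpowers_le.mpr y.1.2) <| by
        rw [Nat.card_zpowers, Subgroup.orderOf_coe, y.2]⟩
      left_inv := fun _ => rfl
      right_inv := fun _ => rfl }
  rw [Nat.card_congr e, Nat.card_eq_fintype_card, Fintype.card_subtype, Nat.card_eq_fintype_card]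
  exact IsCyclic.card_orderOf_eq_totient dvd_rfl

theorem alpha_eq_sum [Fintype G] :
    alpha G = (∑ g : G, (1 / (orderOf g).totient : ℚ)) / Nat.card G := by
  classical
  let zpowersCyclic (g : G) : {C : Subgroup G // IsCyclic C} := ⟨zpowers g, inferInstance⟩
  have fiber_sum (C : {C : Subgroup G // IsCyclic C}) :
      ∑ g : {g : G // zpowersCyclic g = C}, (1 / (orderOf (g : G)).totient : ℚ) = 1 := by
    obtain ⟨C, hC⟩ := C
    have hfiber : {g : G // zpowersCyclic g = ⟨C, hC⟩} ≃ {g : G // zpowers g = C} :=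
      Equiv.subtypeEquivRight fun g => Subtype.ext_iff
    have horder (g : {g : G // zpowersCyclic g = ⟨C, hC⟩}) : orderOf (g : G) = Nat.card C := by
      have hg : zpowers (g : G) = C := Subtype.ext_iff.mp g.2
      rw [← Nat.card_zpowers, hg]
    have hφ : ((Nat.card C).totient : ℚ) ≠ 0 := by
      exact_mod_cast (Nat.totient_pos.mpr Nat.card_pos).ne'
    simp only [horder, Finset.sum_const, Finset.card_univ, ← Nat.card_eq_fintype_card,
      Nat.card_congr hfiber, card_zpowers_eq_totient, nsmul_eq_mul]
    exact mul_one_div_cancel hφ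
  rw [alpha, ← Fintype.sum_fiberwise zpowersCyclic]
  simp_rw [fiber_sum]
  simp [Nat.card_eq_fintype_card]

end Counting

theorem MonoidHom.sum_comp_of_surjective {G G' M : Type*} [Group G] [Group G'] [Fintype G]
    [Fintype G'] [AddCommMonoid M] {f : G →* G'} (hf : Function.Surjective f) (u : G' → M) :
    ∑ g, u (f g) = Nat.card f.ker • ∑ y, u y := by
  classical
  rw [← Fintype.sum_fiberwise' f u, Finset.smul_sum]
  refine Finset.sum_congr rfl fun y _ => ?_
  rw [Finset.sum_const, Finset.card_univ, ← Nat.card_eq_fintype_card,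
    ← Nat.card_congr (MonoidHom.fiberEquivKerOfSurjective hf y)]
  rfl

theorem alpha_le_of_surjective {G G' : Type*} [Group G] [Group G'] [Finite G] (f : G →* G')
    (hf : Function.Surjective f) : alpha G ≤ alpha G' := by
  have : Finite G' := Finite.of_surjective f hf
  have : Fintype G := Fintype.ofFinite G
  have : Fintype G' := Fintype.ofFinite G'
  have hcard : Nat.card G = Nat.card f.ker * Nat.card G' := by
    rw [← f.ker.card_mul_index, index_ker, MonoidHom.range_eq_top.mpr hf, card_top]
  have hterm (g : G) : (1 / (orderOf g).totient : ℚ) ≤ 1 / (orderOf (f g)).totient := by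
    refine one_div_le_one_div_of_le (by exact_mod_cast Nat.totient_pos.mpr (orderOf_pos _)) ?_
    exact_mod_cast Nat.le_of_dvd (Nat.totient_pos.mpr (orderOf_pos g))
      (Nat.totient_dvd_of_dvd (orderOf_map_dvd f g))
  have hker : (0 : ℚ) < Nat.card f.ker := by exact_mod_cast Nat.card_pos
  calc alpha G ≤ (∑ g : G, (1 / (orderOf (f g)).totient : ℚ)) / Nat.card G := by
        rw [alpha_eq_sum]
        gcongr ?_ / _
        exact Finset.sum_le_sum fun g _ => hterm g
    _ = alpha G' := by
        rw [f.sum_comp_of_surjective hf fun y => (1 / (orderOf y).totient : ℚ), alpha_eq_sum,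
          hcard, nsmul_eq_mul, Nat.cast_mul, mul_div_mul_left _ _ hker.ne']

theorem CommGroup.exists_surjective_monoidHom_subgroup {K : Type*} [CommGroup K] [Finite K]
    (H : Subgroup K) : ∃ f : K →* H, Function.Surjective f := by
  have : NeZero (Monoid.exponent K : ℂ) :=
    ⟨Nat.cast_ne_zero.mpr (Monoid.ExponentExists.of_finite).exponent_ne_zero⟩
  have : NeZero (Monoid.exponent H : ℂ) :=
    ⟨Nat.cast_ne_zero.mpr (Monoid.ExponentExists.of_finite).exponent_ne_zero⟩
  obtain ⟨eK⟩ := monoidHom_mulEquiv_of_hasEnoughRootsOfUnity K ℂ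
  obtain ⟨eH⟩ := monoidHom_mulEquiv_of_hasEnoughRootsOfUnity H ℂ
  exact ⟨eH.toMonoidHom.comp ((MonoidHom.domRestrictHom H ℂˣ).comp eK.symm.toMonoidHom),
    eH.surjective.comp ((MonoidHom.domRestrict_surjective ℂ H).comp eK.symm.surjective)⟩

theorem stmt_3 (G : Type*) [CommGroup G] [Finite G] (H K : Subgroup G) (hHK : H ≤ K) :
    alpha K ≤ alpha H := by
  obtain ⟨f, hf⟩ := CommGroup.exists_surjective_monoidHom_subgroup (H.subgroupOf K)
  let e := subgroupOfEquivOfLe hHK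
  exact alpha_le_of_surjective (e.toMonoidHom.comp f) (e.surjective.comp hf)
end

section
/- A finite abelian group G satisfies α(G) = 3/4 if and only if G is isomorphic to (Z/2)^n × Z/4 for some natural number n (including n = 0, i.e., G ≅ Z/4). -/
/-!
Sorting the elements of a finite group `G` by the cyclic subgroup they generate gives
`|G| = ∑ φ(|H|)` over the cyclic subgroups `H`. Those of order at most `2` are in bijection with
the solutions of `g ^ 2 = 1`, and `φ(m) ≥ 2` for `m > 2`, with equality when `m ∣ 4`. Writing `c`
for the number of cyclic subgroups and `G[2]` for the solutions of `g ^ 2 = 1`, this gives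
`|G[2]| ≤ c` and `2c ≤ |G| + |G[2]|`, with equality when `G` has exponent dividing `4`. For abelian
`G`, `G[2]` is a subgroup, and these bounds turn `4c = 3|G|` into `[G : G[2]] = 2` and back.

If `[G : G[2]] = 2`, any `x ∉ G[2]` has order `4`, and a complement of `⟨x²⟩` in the
`𝔽₂`-vector space `G[2]` is a complement of `⟨x⟩` in `G`; it is elementary abelian.
-/

open Finset Subgroup

section Counting

variable {G : Type*} [Group G]

lemma zpowers_eq_iff_mem_and_orderOf_eq [Finite G] {g : G} {H : Subgroup G} :
    zpowers g = H ↔ g ∈ H ∧ orderOf g = Nat.card H := by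
  constructor
  · rintro rfl
    exact ⟨mem_zpowers g, (Nat.card_zpowers g).symm⟩
  · rintro ⟨hg, hcard⟩
    exact eq_of_le_of_card_ge (zpowers_le.mpr hg) (by rw [Nat.card_zpowers, hcard])

lemma orderOf_le_two_iff [Finite G] {g : G} : orderOf g ≤ 2 ↔ g ^ 2 = 1 := by
  refine ⟨fun h => ?_, fun h => Nat.le_of_dvd two_pos (orderOf_dvd_of_pow_eq_one h)⟩
  interval_cases hg : orderOf g
  · exact absurd hg (orderOf_pos g).ne'
  · rw [orderOf_eq_one_iff.mp hg, one_pow]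
  · rw [← hg, pow_orderOf_eq_one]

variable [Fintype G]
open scoped Classical

lemma card_filter_zpowers_eq (H : Subgroup G) [IsCyclic H] :
    #{g : G | zpowers g = H} = (Nat.card H).totient := by
  rw [Nat.card_eq_fintype_card, ← IsCyclic.card_orderOf_eq_totient dvd_rfl]
  refine card_bij
    (fun g hg => ⟨g, (zpowers_eq_iff_mem_and_orderOf_eq.mp (mem_filter.mp hg).2).1⟩) ?_ ?_ ?_
  · intro g hg
    simpa [orderOf_mk, ← Nat.card_eq_fintype_card] using
      (zpowers_eq_iff_mem_and_orderOf_eq.mp (mem_filter.mp hg).2).2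
  · intro a _ b _ hab
    exact congrArg Subtype.val hab
  · intro h hh
    refine ⟨h, ?_, rfl⟩
    simpa [zpowers_eq_iff_mem_and_orderOf_eq, orderOf_coe, Nat.card_eq_fintype_card] using
      (mem_filter.mp hh).2

lemma card_filter_zpowers (P : Subgroup G → Prop) [DecidablePred P] :
    #{g : G | P (zpowers g)} =
      ∑ H ∈ {H : Subgroup G | IsCyclic H ∧ P H}, (Nat.card H).totient := by
  rw [card_eq_sum_card_fiberwise (f := fun g => zpowers g)
    (t := {H : Subgroup G | IsCyclic H ∧ P H})
    fun g hg => by simpa using ⟨inferInstance, (mem_filter.mp hg).2⟩]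
  refine sum_congr rfl fun H hH => ?_
  obtain ⟨hcyc, hP⟩ := (mem_filter.mp hH).2
  rw [filter_filter, ← card_filter_zpowers_eq H]
  congr 1
  refine filter_congr fun g _ => ?_
  constructor
  · exact fun h => h.2
  · rintro rfl; exact ⟨hP, rfl⟩

lemma card_filter_two_lt_orderOf :
    #{g : G | 2 < orderOf g} =
      ∑ H ∈ {H : Subgroup G | IsCyclic H ∧ 2 < Nat.card H}, (Nat.card H).totient := by
  simpa only [Nat.card_zpowers] using card_filter_zpowers fun H : Subgroup G => 2 < Nat.card H

lemma card_filter_sq_eq_one :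
    #{g : G | g ^ 2 = 1} = #{H : Subgroup G | IsCyclic H ∧ Nat.card H ≤ 2} := by
  have h := card_filter_zpowers fun H : Subgroup G => Nat.card H ≤ 2
  simp only [Nat.card_zpowers, orderOf_le_two_iff] at h
  rw [h, card_eq_sum_ones]
  refine sum_congr rfl fun H hH => ?_
  have : Nat.card H ≤ 2 := (mem_filter.mp hH).2.2
  have : 0 < Nat.card H := Nat.card_pos
  interval_cases Nat.card H <;> rfl

lemma card_cyclic_eq_card_sq_eq_one_add :
    Nat.card {H : Subgroup G // IsCyclic H} =
      Nat.card {g : G // g ^ 2 = 1} + #{H : Subgroup G | IsCyclic H ∧ 2 < Nat.card H} := by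
  rw [Nat.card_eq_fintype_card, Nat.card_eq_fintype_card, Fintype.card_subtype,
    Fintype.card_subtype, card_filter_sq_eq_one,
    ← card_filter_add_card_filter_not (s := {H : Subgroup G | IsCyclic H}) (Nat.card · ≤ 2)]
  simp only [filter_filter, not_le]

lemma card_eq_card_sq_eq_one_add_sum_totient :
    Nat.card G = Nat.card {g : G // g ^ 2 = 1} +
      ∑ H ∈ {H : Subgroup G | IsCyclic H ∧ 2 < Nat.card H}, (Nat.card H).totient := by
  rw [← card_filter_two_lt_orderOf, Nat.card_eq_fintype_card, Nat.card_eq_fintype_card,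
    Fintype.card_subtype, ← card_univ, ← card_filter_add_card_filter_not
      (fun g : G => g ^ 2 = 1)]
  simp only [← orderOf_le_two_iff, not_le]

end Counting

section Bounds

variable {G : Type*} [Group G] [Finite G]

lemma card_sq_eq_one_le_card_cyclic :
    Nat.card {g : G // g ^ 2 = 1} ≤ Nat.card {H : Subgroup G // IsCyclic H} := by
  cases nonempty_fintype G
  classical
  rw [card_cyclic_eq_card_sq_eq_one_add]
  exact Nat.le_add_right _ _

lemma two_mul_card_cyclic_le :
    2 * Nat.card {H : Subgroup G // IsCyclic H} ≤ Nat.card G + Nat.card {g : G // g ^ 2 = 1} := by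
  cases nonempty_fintype G
  classical
  have hsum : 2 * #{H : Subgroup G | IsCyclic H ∧ 2 < Nat.card H} ≤
      ∑ H ∈ {H : Subgroup G | IsCyclic H ∧ 2 < Nat.card H}, (Nat.card H).totient := by
    rw [card_eq_sum_ones, mul_sum, mul_one]
    refine sum_le_sum fun H hH => ?_
    have htwo : 2 < Nat.card H := (mem_filter.mp hH).2.2
    obtain ⟨k, hk⟩ := Nat.totient_even htwo
    have := Nat.totient_pos.mpr (Nat.card_pos (α := H))
    omega
  rw [card_cyclic_eq_card_sq_eq_one_add, card_eq_card_sq_eq_one_add_sum_totient (G := G)]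
  omega

lemma two_mul_card_cyclic_eq_of_pow_four (h : ∀ g : G, g ^ 4 = 1) :
    2 * Nat.card {H : Subgroup G // IsCyclic H} = Nat.card G + Nat.card {g : G // g ^ 2 = 1} := by
  cases nonempty_fintype G
  classical
  have hsum : ∑ H ∈ {H : Subgroup G | IsCyclic H ∧ 2 < Nat.card H}, (Nat.card H).totient =
      2 * #{H : Subgroup G | IsCyclic H ∧ 2 < Nat.card H} := by
    rw [card_eq_sum_ones, mul_sum, mul_one]
    refine sum_congr rfl fun H hH => ?_
    obtain ⟨hcyc, htwo⟩ := (mem_filter.mp hH).2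
    have hdvd : Nat.card H ∣ 4 := by
      rw [← IsCyclic.exponent_eq_card]
      exact Monoid.exponent_dvd_of_forall_pow_eq_one fun g => Subtype.ext (h g)
    have hle := Nat.le_of_dvd four_pos hdvd
    interval_cases Nat.card H
    · exact absurd hdvd (by decide)
    · rfl
  rw [card_cyclic_eq_card_sq_eq_one_add, card_eq_card_sq_eq_one_add_sum_totient (G := G), hsum]
  ring

end Bounds

lemma alpha_eq_three_quarters_iff {G : Type*} [Group G] [Finite G] :
    alpha G = 3 / 4 ↔ 4 * Nat.card {H : Subgroup G // IsCyclic H} = 3 * Nat.card G := by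
  have hG : (Nat.card G : ℚ) ≠ 0 := by exact_mod_cast Nat.card_pos.ne'
  rw [alpha, div_eq_iff hG]
  constructor <;> intro h
  · have : (4 * Nat.card {H : Subgroup G // IsCyclic H} : ℚ) = 3 * Nat.card G := by linarith
    exact_mod_cast this
  · have : (4 * Nat.card {H : Subgroup G // IsCyclic H} : ℚ) = 3 * Nat.card G := by
      exact_mod_cast h
    linarith

section Abelian

variable {G : Type*} [CommGroup G]

lemma card_ker_powMonoidHom_two :
    Nat.card (powMonoidHom 2 : G →* G).ker = Nat.card {g : G // g ^ 2 = 1} :=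
  Nat.card_congr (Equiv.subtypeEquivRight fun _ => MonoidHom.mem_ker)

lemma pow_four_eq_one_of_index_eq_two (h : (powMonoidHom 2 : G →* G).ker.index = 2) (g : G) :
    g ^ 4 = 1 := by
  have := (powMonoidHom 2 : G →* G).ker.pow_index_mem g
  rwa [h, MonoidHom.mem_ker, powMonoidHom_apply, ← pow_mul] at this

theorem alpha_eq_three_quarters_iff_index_eq_two [Finite G] :
    alpha G = 3 / 4 ↔ (powMonoidHom 2 : G →* G).ker.index = 2 := by
  have hcard := (powMonoidHom 2 : G →* G).ker.index_mul_card
  have hpos : 0 < Nat.card (powMonoidHom 2 : G →* G).ker := Nat.card_pos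
  rw [card_ker_powMonoidHom_two] at hcard hpos
  rw [alpha_eq_three_quarters_iff]
  constructor
  · intro h
    have hle := two_mul_card_cyclic_le (G := G)
    have hge := card_sq_eq_one_le_card_cyclic (G := G)
    have hlt : 1 < (powMonoidHom 2 : G →* G).ker.index := by
      by_contra! h1
      nlinarith
    have hle2 : (powMonoidHom 2 : G →* G).ker.index ≤ 2 := by
      by_contra! h3
      nlinarith
    omega
  · intro h
    have := two_mul_card_cyclic_eq_of_pow_four (pow_four_eq_one_of_index_eq_two h)
    rw [h] at hcard
    omega

end Abelian

section ElementaryAbelian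

variable {V : Type*} [CommGroup V]

lemma exists_mulEquiv_fin_pi_zmod_two [Finite V] (h : ∀ v : V, v ^ 2 = 1) :
    ∃ n : ℕ, Nonempty (V ≃* Multiplicative (Fin n → ZMod 2)) := by
  let _ : Module (ZMod 2) (Additive V) := AddCommGroup.zmodModule fun v => h v.toMul
  exact ⟨_, ⟨AddEquiv.toMultiplicativeRight
    (Module.finBasis (ZMod 2) (Additive V)).equivFun.toAddEquiv⟩⟩

lemma exists_subgroup_notMem_card_mul_two_eq (h : ∀ v : V, v ^ 2 = 1) {z : V} (hz : z ≠ 1) :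
    ∃ C : Subgroup V, z ∉ C ∧ Nat.card C * 2 = Nat.card V := by
  let _ : Module (ZMod 2) (Additive V) := AddCommGroup.zmodModule fun v => h v.toMul
  have hz' : Additive.ofMul z ≠ 0 := hz
  obtain ⟨W, hW⟩ := Submodule.exists_isCompl (Submodule.span (ZMod 2) {Additive.ofMul z})
  refine ⟨W.toAddSubgroup.toSubgroup', fun hzW => hz' ?_, ?_⟩
  · exact Submodule.disjoint_def.mp hW.disjoint _ (Submodule.mem_span_singleton_self _) hzW
  · have hspan : Nat.card (Submodule.span (ZMod 2) {Additive.ofMul z}) = 2 := by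
      rw [← Nat.card_congr (LinearEquiv.toSpanNonzeroSingleton (ZMod 2) _ _ hz').toEquiv,
        Nat.card_zmod]
    have := Nat.card_congr (Submodule.prodEquivOfIsCompl _ _ hW).toEquiv
    rw [Nat.card_prod, hspan] at this
    rw [mul_comm]
    exact this

end ElementaryAbelian

noncomputable def Subgroup.IsComplement'.prodMulEquiv {G : Type*} [CommGroup G]
    {H K : Subgroup G} (h : H.IsComplement' K) : H × K ≃* G :=
  MulEquiv.ofBijective (H.subtype.coprod K.subtype) h

section Structure

variable {G : Type*} [CommGroup G] [Finite G]

lemma exists_isComplement'_zpowers_of_index_eq_two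
    (h : (powMonoidHom 2 : G →* G).ker.index = 2) :
    ∃ x : G, orderOf x = 4 ∧
      ∃ C : Subgroup G, (zpowers x).IsComplement' C ∧ ∀ c : C, c ^ 2 = 1 := by
  set K := (powMonoidHom 2 : G →* G).ker
  have hmemK : ∀ g : G, g ∈ K ↔ g ^ 2 = 1 := fun g => MonoidHom.mem_ker
  obtain ⟨x, hxK⟩ : ∃ x : G, x ∉ K := by
    by_contra! hall
    rw [(eq_top_iff' K).mpr hall, index_top] at h
    exact absurd h (by decide)
  have hx2 : x ^ 2 ≠ 1 := mt (hmemK x).mpr hxK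
  have hx : orderOf x = 4 :=
    orderOf_eq_prime_pow (p := 2) (n := 1) hx2 (pow_four_eq_one_of_index_eq_two h x)
  have hzK : x ^ 2 ∈ K :=
    (hmemK _).mpr (by rw [← pow_mul]; exact pow_four_eq_one_of_index_eq_two h x)
  obtain ⟨C, hzC, hC⟩ := exists_subgroup_notMem_card_mul_two_eq
    (fun k : K => Subtype.ext ((hmemK k).mp k.2)) (z := ⟨x ^ 2, hzK⟩)
    (mt (congrArg Subtype.val) hx2)
  refine ⟨x, hx, C.map K.subtype, isComplement'_of_card_mul_and_disjoint ?_ ?_, ?_⟩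
  · rw [Nat.card_zpowers, hx, card_map_of_injective K.subtype_injective, ← K.index_mul_card, h,
      ← hC]
    ring
  · rw [disjoint_def]
    rintro _ hgx ⟨c, hc, rfl⟩
    classical
    obtain ⟨k, hk, hxk⟩ := mem_image.mp (mem_zpowers_iff_mem_range_orderOf.mp hgx)
    rw [hx, mem_range] at hk
    change x ^ k = c at hxk
    have hc2 : (c : G) ^ 2 = 1 := (hmemK c).mp c.2
    interval_cases k
    · simpa using hxk.symm
    · exact absurd (by simpa [← hxk] using hc2) hx2
    · exact absurd ((Subtype.ext hxk : (⟨x ^ 2, hzK⟩ : K) = c) ▸ hc) hzC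
    · refine absurd ?_ hx2
      rw [← hc2, ← hxk, ← pow_mul, show 3 * 2 = 4 + 2 by rfl, pow_add,
        pow_four_eq_one_of_index_eq_two h x, one_mul]
  · rintro ⟨_, c, -, rfl⟩
    exact Subtype.ext ((hmemK c).mp c.2)

theorem exists_mulEquiv_of_index_eq_two (h : (powMonoidHom 2 : G →* G).ker.index = 2) :
    ∃ n : ℕ, Nonempty (G ≃* Multiplicative ((Fin n → ZMod 2) × ZMod 4)) := by
  obtain ⟨x, hx, C, hcompl, hC⟩ := exists_isComplement'_zpowers_of_index_eq_two h
  obtain ⟨n, ⟨eC⟩⟩ := exists_mulEquiv_fin_pi_zmod_two hC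
  have eX : zpowers x ≃* Multiplicative (ZMod 4) := mulEquivOfCyclicCardEq <| by
    rw [Nat.card_zpowers, hx, Nat.card_congr Multiplicative.toAdd, Nat.card_zmod]
  exact ⟨n, ⟨hcompl.prodMulEquiv.symm.trans <| (eX.prodCongr eC).trans <|
    MulEquiv.prodComm.trans (MulEquiv.prodMultiplicative _ _).symm⟩⟩

end Structure

lemma index_ker_powMonoidHom_two_congr {G H : Type*} [CommGroup G] [CommGroup H] (e : G ≃* H) :
    (powMonoidHom 2 : G →* G).ker.index = (powMonoidHom 2 : H →* H).ker.index := by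
  have : (powMonoidHom 2 : G →* G).ker = (powMonoidHom 2 : H →* H).ker.comap e.toMonoidHom := by
    ext g
    simp [← map_pow]
  rw [this, index_comap_of_surjective _ e.surjective]

lemma card_sq_eq_one_fin_pi_zmod_two_prod_zmod_four (n : ℕ) :
    Nat.card {x : Multiplicative ((Fin n → ZMod 2) × ZMod 4) // x ^ 2 = 1} = 2 ^ n * 2 := by
  have hV : ∀ a : Fin n → ZMod 2, a + a = 0 :=
    fun a => funext fun i => (by decide : ∀ t : ZMod 2, t + t = 0) (a i)
  have e : {x : Multiplicative ((Fin n → ZMod 2) × ZMod 4) // x ^ 2 = 1} ≃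
      (Fin n → ZMod 2) × {b : ZMod 4 // b + b = 0} :=
    (Multiplicative.toAdd.subtypeEquiv (q := fun p => p.1 + p.1 = 0 ∧ p.2 + p.2 = 0) fun x => by
        simp only [sq, ← toAdd_eq_zero, toAdd_mul, Prod.ext_iff, Prod.fst_add, Prod.snd_add,
          Prod.fst_zero, Prod.snd_zero]).trans <|
      (Equiv.subtypeProdEquivProd (q := fun b : ZMod 4 => b + b = 0)).trans
        ((Equiv.subtypeUnivEquiv hV).prodCongr (Equiv.refl _))
  rw [Nat.card_congr e, Nat.card_prod, Nat.card_pi, Nat.card_zmod, prod_const, card_univ,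
    Fintype.card_fin, Nat.card_eq_fintype_card]
  rfl

lemma index_ker_powMonoidHom_two_fin_pi_zmod_two_prod_zmod_four (n : ℕ) :
    (powMonoidHom 2 : Multiplicative ((Fin n → ZMod 2) × ZMod 4) →* _).ker.index = 2 := by
  have h := (powMonoidHom 2 : Multiplicative ((Fin n → ZMod 2) × ZMod 4) →* _).ker.index_mul_card
  rw [card_ker_powMonoidHom_two, card_sq_eq_one_fin_pi_zmod_two_prod_zmod_four,
    Nat.card_congr Multiplicative.toAdd, Nat.card_prod, Nat.card_pi] at h
  simp only [Nat.card_zmod, prod_const, card_univ, Fintype.card_fin] at h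
  exact Nat.eq_of_mul_eq_mul_right (m := 2 ^ n * 2) (by positivity) (by rw [h]; ring)

theorem stmt_4 (G : Type*) [CommGroup G] [Finite G] :
    alpha G = 3 / 4 ↔
      ∃ n : ℕ, Nonempty (G ≃* Multiplicative ((Fin n → ZMod 2) × ZMod 4)) := by
  rw [alpha_eq_three_quarters_iff_index_eq_two]
  refine ⟨exists_mulEquiv_of_index_eq_two, fun ⟨n, ⟨e⟩⟩ => ?_⟩
  rw [index_ker_powMonoidHom_two_congr e,
    index_ker_powMonoidHom_two_fin_pi_zmod_two_prod_zmod_four]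
end

section
/- For a finite abelian p-group G ≅ Z/p^{d_1} × ⋯ × Z/p^{d_k} with 1 ≤ d_1 ≤ ⋯ ≤ d_k, the total number of cyclic subgroups of G equals 1 + (1/(p-1)) · Σ_{i=0}^{k-2} p^{d_0+⋯+d_i} · (p^{k-i}-1)/(p^{k-i-1}-1) · (p^{(k-i-1)d_{i+1}} - p^{(k-i-1)d_i}) + (d_k - d_{k-1}) p^{d_0+⋯+d_{k-1}}, where d_0 = 0. -/
/-!
A cyclic subgroup `⟨x⟩` has exactly `φ (orderOf x)` generators, so the number of cyclic
subgroups of a finite group is `∑ₓ 1 / φ (orderOf x)`. In a `p`-group, grouping the elements by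
their order `p ^ (t + 1)` turns this into `1 + ∑ₜ (N (t + 1) - N t) / (p ^ t * (p - 1))`, where
`N m` counts the solutions of `x ^ p ^ m = 1`. For `ℤ/p^d₁ × ⋯ × ℤ/p^dₖ` one has
`N m = p ^ ∑ⱼ min dⱼ m`; on each range `dᵢ ≤ t < dᵢ₊₁` this exponent is affine in `t` with
slope `k - i`, so the sum over that range is geometric with ratio `p ^ (k - i - 1)`.
-/

open Finset Subgroup

lemma Nat.dvd_prime_pow_succ_iff {p a t : ℕ} (hp : p.Prime) :
    a ∣ p ^ (t + 1) ↔ a = p ^ (t + 1) ∨ a ∣ p ^ t := by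
  refine ⟨fun h => ?_, fun h => h.elim (· ▸ dvd_rfl) (·.trans (pow_dvd_pow p t.le_succ))⟩
  obtain ⟨j, hj, rfl⟩ := (Nat.dvd_prime_pow hp).mp h
  rcases hj.eq_or_lt with rfl | hj
  · exact Or.inl rfl
  · exact Or.inr (pow_dvd_pow p (Nat.lt_succ_iff.mp hj))

lemma Nat.gcd_pow_pow (p a b : ℕ) : Nat.gcd (p ^ a) (p ^ b) = p ^ min a b := by
  rcases le_total a b with h | h
  · rw [Nat.gcd_eq_left (pow_dvd_pow p h), min_eq_left h]
  · rw [Nat.gcd_eq_right (pow_dvd_pow p h), min_eq_right h]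

theorem Finset.sum_inv_card_fiber_eq_card_image {α β : Type*} [Fintype α] [DecidableEq β]
    (f : α → β) : ∑ x, (#{y | f y = f x} : ℚ)⁻¹ = #(univ.image f) := by
  rw [← sum_fiberwise_of_maps_to (t := univ.image f)
      fun x _ => mem_image_of_mem f (mem_univ x), card_eq_sum_ones, Nat.cast_sum]
  refine sum_congr rfl fun b hb => ?_
  have hne : (#{y | f y = b} : ℚ) ≠ 0 := by
    obtain ⟨x, -, rfl⟩ := mem_image.mp hb
    exact Nat.cast_ne_zero.mpr (card_ne_zero.mpr ⟨x, by simp⟩)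
  rw [sum_congr rfl fun x hx => by rw [(mem_filter.mp hx).2], sum_const, nsmul_eq_mul,
    mul_inv_cancel₀ hne, Nat.cast_one]

section CyclicSubgroups

variable {G : Type*} [Group G]

lemma zpowers_eq_zpowers_iff_of_finite [Finite G] {a b : G} :
    zpowers b = zpowers a ↔ b ∈ zpowers a ∧ orderOf b = orderOf a := by
  refine ⟨fun h => ⟨h ▸ mem_zpowers b, ?_⟩, fun ⟨hmem, hord⟩ => ?_⟩
  · rw [← Nat.card_zpowers, h, Nat.card_zpowers]
  · refine eq_of_le_of_card_ge (zpowers_le.mpr hmem) ?_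
    rw [Nat.card_zpowers, Nat.card_zpowers, hord]

lemma card_zpowers_eq_zpowers [Finite G] (a : G) :
    Nat.card {b : G // zpowers b = zpowers a} = (orderOf a).totient := by
  have e : {b : G // zpowers b = zpowers a} ≃ {b : zpowers a // orderOf b = orderOf a} :=
    { toFun := fun b => ⟨⟨b, (zpowers_eq_zpowers_iff_of_finite.mp b.2).1⟩,
        by rw [orderOf_mk]; exact (zpowers_eq_zpowers_iff_of_finite.mp b.2).2⟩
      invFun := fun b => ⟨b, zpowers_eq_zpowers_iff_of_finite.mpr ⟨b.1.2, by
        rw [← orderOf_mk b.1.1 b.1.2]; exact b.2⟩⟩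
      left_inv := fun _ => rfl
      right_inv := fun _ => rfl }
  classical
  have := Fintype.ofFinite G
  rw [Nat.card_congr e, Nat.card_eq_fintype_card, Fintype.card_subtype,
    IsCyclic.card_orderOf_eq_totient (by rw [Fintype.card_zpowers])]

theorem card_isCyclic_subgroups_eq_sum_inv_totient [Fintype G] :
    (Nat.card {H : Subgroup G // IsCyclic H} : ℚ) = ∑ x : G, ((orderOf x).totient : ℚ)⁻¹ := by
  classical
  have hcyc : {H : Subgroup G // IsCyclic H} ≃ univ.image zpowers :=
    Equiv.subtypeEquivRight fun H => by simp [H.isCyclic_iff_exists_zpowers_eq_top]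
  rw [Nat.card_congr hcyc, Nat.card_eq_fintype_card, Fintype.card_coe,
    ← sum_inv_card_fiber_eq_card_image]
  refine sum_congr rfl fun x _ => ?_
  rw [← card_zpowers_eq_zpowers, Nat.card_eq_fintype_card, Fintype.card_subtype]

end CyclicSubgroups

section PGroup

variable {G : Type*} [Group G] [Fintype G] {p : ℕ}

lemma card_orderOf_eq_prime_pow_succ (hp : p.Prime) (t : ℕ) :
    (#{x : G | orderOf x = p ^ (t + 1)} : ℚ) =
      #{x : G | orderOf x ∣ p ^ (t + 1)} - #{x : G | orderOf x ∣ p ^ t} := by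
  classical
  have hdisj : Disjoint ({x : G | orderOf x = p ^ (t + 1)} : Finset G)
      ({x | orderOf x ∣ p ^ t} : Finset G) := by
    rw [disjoint_filter]
    intro x _ h h'
    rw [h, Nat.pow_dvd_pow_iff_le_right hp.one_lt] at h'
    omega
  simp_rw [Nat.dvd_prime_pow_succ_iff hp, filter_or, card_union_of_disjoint hdisj]
  push_cast
  ring

theorem sum_inv_totient_orderOf_of_forall_dvd (hp : p.Prime) {D : ℕ}
    (hD : ∀ x : G, orderOf x ∣ p ^ D) :
    ∑ x : G, ((orderOf x).totient : ℚ)⁻¹ = 1 + ∑ t ∈ range D,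
      ((#{x : G | orderOf x ∣ p ^ (t + 1)} : ℚ) - #{x : G | orderOf x ∣ p ^ t}) /
        (p ^ t * (p - 1)) := by
  have hmaps : ∀ x ∈ (univ : Finset G), orderOf x ∈ (range (D + 1)).image (p ^ ·) := by
    intro x _
    obtain ⟨e, he, hx⟩ := (Nat.dvd_prime_pow hp).mp (hD x)
    exact mem_image.mpr ⟨e, mem_range.mpr (Nat.lt_succ_of_le he), hx.symm⟩
  have hfiber : ∀ n, ∑ x ∈ {x : G | orderOf x = n}, ((orderOf x).totient : ℚ)⁻¹ =
      #{x : G | orderOf x = n} / n.totient := fun n => by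
    rw [sum_congr rfl fun x hx => by rw [(mem_filter.mp hx).2], sum_const, nsmul_eq_mul,
      div_eq_mul_inv]
  rw [← sum_fiberwise_of_maps_to hmaps,
    sum_image fun a _ b _ h => Nat.pow_right_injective hp.two_le h, sum_range_succ']
  have hone : #{x : G | orderOf x = p ^ 0} = 1 := by
    rw [pow_zero]
    exact card_eq_one.mpr ⟨1, by ext; simp⟩
  simp only [hfiber, hone]
  simp [Nat.totient_prime_pow_succ hp, card_orderOf_eq_prime_pow_succ hp, Nat.cast_sub hp.one_le,
    add_comm]

end PGroup

lemma ZMod.card_nsmul_eq_zero (n t : ℕ) [NeZero n] :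
    Nat.card {a : ZMod n // t • a = 0} = n.gcd t := by
  simpa using IsAddCyclic.card_nsmulAddMonoidHom_ker (ZMod n) t

lemma card_orderOf_dvd_pi_zmod {ι : Type*} [Fintype ι] [DecidableEq ι] (n : ι → ℕ)
    [∀ i, NeZero (n i)] (t : ℕ) :
    #{x : Multiplicative (∀ i, ZMod (n i)) | orderOf x ∣ t} = ∏ i, (n i).gcd t := by
  have e : {x : Multiplicative (∀ i, ZMod (n i)) // orderOf x ∣ t} ≃
      ∀ i, {a : ZMod (n i) // t • a = 0} :=
    (Multiplicative.toAdd.subtypeEquiv fun x => by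
      rw [orderOf_dvd_iff_pow_eq_one, ← toAdd_eq_zero, toAdd_pow, funext_iff]
      rfl).trans
      (Equiv.subtypePiEquivPi (p := fun i (a : ZMod (n i)) => t • a = 0))
  rw [← Fintype.card_subtype, ← Nat.card_eq_fintype_card, Nat.card_congr e, Nat.card_pi]
  simp only [ZMod.card_nsmul_eq_zero]

lemma orderOf_dvd_of_forall_dvd_pi_zmod {ι : Type*} (n : ι → ℕ)
    (x : Multiplicative (∀ i, ZMod (n i))) {m : ℕ} (h : ∀ i, n i ∣ m) : orderOf x ∣ m := by
  rw [orderOf_dvd_iff_pow_eq_one, ← toAdd_eq_zero, toAdd_pow]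
  funext i
  rw [Pi.smul_apply, nsmul_eq_mul, (ZMod.natCast_eq_zero_iff m (n i)).mpr (h i), zero_mul,
    Pi.zero_apply]

lemma pow_sub_pow_div_pow_mul_sub_one (q : ℚ) (hq0 : q ≠ 0) (hq1 : q ≠ 1) (S u t : ℕ) :
    (q ^ (S + (u + 1) * (t + 1)) - q ^ (S + (u + 1) * t)) / (q ^ t * (q - 1)) =
      q ^ S * ((q ^ (u + 1) - 1) / (q - 1)) * (q ^ u) ^ t := by
  have : q - 1 ≠ 0 := sub_ne_zero.mpr hq1
  rw [show S + (u + 1) * (t + 1) = S + u * t + t + u + 1 by ring,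
    show S + (u + 1) * t = S + u * t + t by ring]
  field_simp
  ring

section MonotoneExponents

variable {d : ℕ → ℕ} {k : ℕ}

lemma sum_range_sum_Ico_eq_sum_Ico {M : Type*} [AddCommMonoid M] (f : ℕ → M)
    (hmono : ∀ i j, i ≤ j → j ≤ k → d i ≤ d j) :
    ∑ i ∈ range k, ∑ t ∈ Ico (d i) (d (i + 1)), f t = ∑ t ∈ Ico (d 0) (d k), f t := by
  induction k with
  | zero => simp
  | succ n ih =>
    rw [sum_range_succ, ih fun i j hij hj => hmono i j hij (hj.trans n.le_succ)]
    exact sum_Ico_consecutive f (hmono 0 n n.zero_le n.le_succ) (hmono n (n + 1) n.le_succ le_rfl)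

lemma sum_range_min_eq (hmono : ∀ i j, i ≤ j → j ≤ k → d i ≤ d j) {i n : ℕ} (hi : i < k)
    (hin : d i ≤ n) (hni : n ≤ d (i + 1)) :
    ∑ j ∈ range k, min (d (j + 1)) n = ∑ j ∈ range i, d (j + 1) + (k - i) * n := by
  rw [← sum_range_add_sum_Ico _ hi.le]
  congr 1
  · refine sum_congr rfl fun j hj => min_eq_left ?_
    exact (hmono (j + 1) i (mem_range.mp hj) hi.le).trans hin
  · rw [sum_congr rfl fun j hj => min_eq_right ?_, sum_const, Nat.card_Ico, smul_eq_mul]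
    have := mem_Ico.mp hj
    exact hni.trans (hmono (i + 1) (j + 1) (by omega) (by omega))

lemma sum_Ico_layer_eq (q : ℚ) (hq0 : q ≠ 0) (hq1 : q ≠ 1) (hd0 : d 0 = 0)
    (hmono : ∀ i j, i ≤ j → j ≤ k → d i ≤ d j) {i : ℕ} (hi : i < k) :
    ∑ t ∈ Ico (d i) (d (i + 1)),
        (q ^ (∑ j ∈ range k, min (d (j + 1)) (t + 1)) -
          q ^ (∑ j ∈ range k, min (d (j + 1)) t)) / (q ^ t * (q - 1)) =
      q ^ (∑ j ∈ range (i + 1), d j) * ((q ^ (k - i) - 1) / (q - 1)) *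
        ∑ t ∈ Ico (d i) (d (i + 1)), (q ^ (k - i - 1)) ^ t := by
  rw [mul_sum]
  refine sum_congr rfl fun t ht => ?_
  obtain ⟨hit, hti⟩ := mem_Ico.mp ht
  rw [sum_range_min_eq hmono hi (by omega) hti, sum_range_min_eq hmono hi hit hti.le,
    sum_range_succ', hd0, add_zero, show k - i = k - i - 1 + 1 by omega]
  exact pow_sub_pow_div_pow_mul_sub_one q hq0 hq1 _ _ t

theorem sum_layers_eq (q : ℚ) (hq : 1 < q) (hk : 1 ≤ k) (hd0 : d 0 = 0)
    (hmono : ∀ i j, i ≤ j → j ≤ k → d i ≤ d j) :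
    ∑ t ∈ range (d k),
        (q ^ (∑ j ∈ range k, min (d (j + 1)) (t + 1)) -
          q ^ (∑ j ∈ range k, min (d (j + 1)) t)) / (q ^ t * (q - 1)) =
      (1 / (q - 1)) *
        ∑ i ∈ range (k - 1), q ^ (∑ j ∈ range (i + 1), d j) *
          ((q ^ (k - i) - 1) / (q ^ (k - i - 1) - 1)) *
          (q ^ ((k - i - 1) * d (i + 1)) - q ^ ((k - i - 1) * d i)) +
      ((d k - d (k - 1) : ℕ) : ℚ) * q ^ (∑ j ∈ range k, d j) := by
  have hq0 : q ≠ 0 := by positivity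
  have hq1 : q - 1 ≠ 0 := by linarith
  obtain ⟨n, rfl⟩ : ∃ n, k = n + 1 := ⟨k - 1, by omega⟩
  have hrange : range (d (n + 1)) = Ico (d 0) (d (n + 1)) := by rw [hd0, range_eq_Ico]
  rw [hrange, ← sum_range_sum_Ico_eq_sum_Ico (M := ℚ) _ hmono,
    sum_congr rfl fun i hi => sum_Ico_layer_eq q hq0 hq.ne' hd0 hmono (mem_range.mp hi),
    sum_range_succ, Nat.add_sub_cancel, mul_sum (range n)]
  congr 1
  · refine sum_congr rfl fun i hi => ?_
    have hi := mem_range.mp hi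
    have hqu : q ^ (n + 1 - i - 1) ≠ 1 := (one_lt_pow₀ hq (by omega)).ne'
    rw [geom_sum_Ico hqu (hmono i (i + 1) i.le_succ (by omega)), ← pow_mul, ← pow_mul]
    field_simp
  · simp [Nat.cast_sub (hmono n (n + 1) n.le_succ le_rfl), hq1, mul_comm]

end MonotoneExponents

theorem stmt_5_general (p k : ℕ) (hp : p.Prime) (hk : 1 ≤ k) (d : ℕ → ℕ)
    (hd0 : d 0 = 0)
    (hmono : ∀ i j, i ≤ j → j ≤ k → d i ≤ d j)
    (G : Type*) [CommGroup G]
    (hiso : Nonempty (G ≃* Multiplicative (∀ i : Fin k, ZMod (p ^ d (i + 1))))) :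
    (Nat.card {H : Subgroup G // IsCyclic H} : ℚ) =
      1 + (1 / ((p : ℚ) - 1)) *
        ∑ i ∈ Finset.range (k - 1),
          (p : ℚ) ^ (∑ j ∈ Finset.range (i + 1), d j) *
            (((p : ℚ) ^ (k - i) - 1) / ((p : ℚ) ^ (k - i - 1) - 1)) *
            ((p : ℚ) ^ ((k - i - 1) * d (i + 1)) - (p : ℚ) ^ ((k - i - 1) * d i)) +
      ((d k - d (k - 1) : ℕ) : ℚ) * (p : ℚ) ^ (∑ j ∈ Finset.range k, d j) := by
  obtain ⟨e⟩ := hiso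
  have : ∀ i : Fin k, NeZero (p ^ d (i + 1)) := fun _ => ⟨pow_ne_zero _ hp.ne_zero⟩
  have := Fintype.ofEquiv _ e.symm.toEquiv
  have hexp (y : Multiplicative (∀ i : Fin k, ZMod (p ^ d (i + 1)))) : orderOf y ∣ p ^ d k :=
    orderOf_dvd_of_forall_dvd_pi_zmod _ y fun i => pow_dvd_pow p (hmono _ _ i.isLt le_rfl)
  have hcard (m : ℕ) :
      (#{y : Multiplicative (∀ i : Fin k, ZMod (p ^ d (i + 1))) | orderOf y ∣ p ^ m} : ℚ) =
        (p : ℚ) ^ ∑ j ∈ range k, min (d (j + 1)) m := by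
    rw [card_orderOf_dvd_pi_zmod]
    simp only [Nat.gcd_pow_pow, prod_pow_eq_pow_sum,
      Fin.sum_univ_eq_sum_range (fun j => min (d (j + 1)) m), Nat.cast_pow]
  rw [card_isCyclic_subgroups_eq_sum_inv_totient,
    Fintype.sum_equiv e.toEquiv _ (fun y => ((orderOf y).totient : ℚ)⁻¹)
      fun x => by rw [MulEquiv.toEquiv_eq_coe, EquivLike.coe_coe, MulEquiv.orderOf_eq],
    sum_inv_totient_orderOf_of_forall_dvd hp hexp]
  simp only [hcard]
  rw [sum_layers_eq (p : ℚ) (by exact_mod_cast hp.one_lt) hk hd0 hmono, add_assoc]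

theorem stmt_5 (p k : ℕ) (hp : p.Prime) (hk : 1 ≤ k) (d : ℕ → ℕ)
    (hd0 : d 0 = 0) (hd1 : 1 ≤ d 1)
    (hmono : ∀ i j, i ≤ j → j ≤ k → d i ≤ d j)
    (G : Type*) [CommGroup G]
    (hiso : Nonempty (G ≃* Multiplicative (∀ i : Fin k, ZMod (p ^ d (i + 1))))) :
    (Nat.card {H : Subgroup G // IsCyclic H} : ℚ) =
      1 + (1 / ((p : ℚ) - 1)) *
        ∑ i ∈ Finset.range (k - 1),
          (p : ℚ) ^ (∑ j ∈ Finset.range (i + 1), d j) *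
            (((p : ℚ) ^ (k - i) - 1) / ((p : ℚ) ^ (k - i - 1) - 1)) *
            ((p : ℚ) ^ ((k - i - 1) * d (i + 1)) - (p : ℚ) ^ ((k - i - 1) * d i)) +
      ((d k - d (k - 1) : ℕ) : ℚ) * (p : ℚ) ^ (∑ j ∈ Finset.range k, d j) :=
  stmt_5_general p k hp hk d hd0 hmono G hiso
end

section
/- Let n ≥ 2 and let G be a group of order 2^n with exponent 4. Then α(G) = 3/4 if and only if the number of involutions of G equals 2^{n-1} - 1. -/
open Subgroup Finset

private lemma dvd_four' {d : ℕ} (h : d ∣ 4) (h0 : 0 < d) : d = 1 ∨ d = 2 ∨ d = 4 := by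
  have hle : d ≤ 4 := Nat.le_of_dvd (by norm_num) h
  interval_cases d <;> omega

private lemma gen_pow_mem {G : Type*} [Group G] [Finite G] {a x : G}
    (hx : x ∈ zpowers a) : ∃ k : ℕ, k < orderOf a ∧ a ^ k = x := by
  have hfin : IsOfFinOrder a := isOfFinOrder_of_finite a
  obtain ⟨k, hk⟩ := (hfin.mem_powers_iff_mem_zpowers).mpr hx
  exact ⟨k % orderOf a, Nat.mod_lt _ hfin.orderOf_pos, by rw [pow_mod_orderOf]; exact hk⟩

private lemma fiber4 {G : Type*} [Group G] [Finite G] (a : G) (h4 : orderOf a = 4) (x : G) :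
    zpowers x = zpowers a ↔ x = a ∨ x = a ^ 3 := by
  constructor
  · intro h
    have hx : orderOf x = 4 := by
      rw [← Nat.card_zpowers x, h, Nat.card_zpowers, h4]
    have hmem : x ∈ zpowers a := h ▸ mem_zpowers x
    obtain ⟨k, hk, rfl⟩ := gen_pow_mem hmem
    rw [h4] at hk
    interval_cases k
    · simp at hx
    · exact Or.inl (pow_one a)
    · exfalso
      have h1 : (a ^ 2) ^ 2 = 1 := by
        rw [← pow_mul]
        have : a ^ orderOf a = 1 := pow_orderOf_eq_one a
        rwa [h4] at this
      have := orderOf_dvd_of_pow_eq_one h1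
      rw [hx] at this
      omega
    · exact Or.inr rfl
  · rintro (rfl | rfl)
    · rfl
    · apply le_antisymm
      · exact zpowers_le.mpr (pow_mem (mem_zpowers a) 3)
      · refine zpowers_le.mpr ?_
        have h9 : (a ^ 3) ^ 3 = a := by
          rw [← pow_mul]
          calc a ^ (3 * 3) = a ^ (3 * 3 % orderOf a) := (pow_mod_orderOf a _).symm
          _ = a := by rw [h4]; norm_num
        have hm := pow_mem (mem_zpowers (a ^ 3)) 3
        rwa [h9] at hm

private lemma fiber2 {G : Type*} [Group G] [Finite G] (a : G) (h2 : orderOf a ∣ 2) (x : G) :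
    zpowers x = zpowers a ↔ x = a := by
  constructor
  · intro h
    have hx : orderOf x = orderOf a := by
      rw [← Nat.card_zpowers x, h, Nat.card_zpowers]
    have hmem : x ∈ zpowers a := h ▸ mem_zpowers x
    obtain ⟨k, hk, rfl⟩ := gen_pow_mem hmem
    have hpos : 0 < orderOf a := (isOfFinOrder_of_finite a).orderOf_pos
    rcases dvd_four' (h2.trans (by norm_num)) hpos with h1 | h1 | h1
    · have : a = 1 := orderOf_eq_one_iff.mp h1
      subst this; simp
    · rw [h1] at hk
      interval_cases k
      · rw [pow_zero] at hx ⊢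
        rw [orderOf_one] at hx
        omega
      · exact pow_one a
    · rw [h1] at h2; omega
  · rintro rfl; rfl

theorem stmt_7 (n : ℕ) (hn : 2 ≤ n) (G : Type*) [Group G] [Finite G]
    (hcard : Nat.card G = 2 ^ n) (hexp : Monoid.exponent G = 4) :
    alpha G = 3 / 4 ↔ Nat.card {x : G // orderOf x = 2} = 2 ^ (n - 1) - 1 := by
  classical
  cases nonempty_fintype G
  set w : G → ℕ := fun x => if orderOf x = 4 then 1 else 2 with hw
  set f : G → Subgroup G := fun x => zpowers x with hf
  set T : Finset (Subgroup G) := Finset.univ.image f with hT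
  have horddvd : ∀ x : G, orderOf x ∣ 4 := fun x => hexp ▸ Monoid.order_dvd_exponent x
  have hord : ∀ x : G, orderOf x = 1 ∨ orderOf x = 2 ∨ orderOf x = 4 := fun x =>
    dvd_four' (horddvd x) (isOfFinOrder_of_finite x).orderOf_pos
  -- T is the set of cyclic subgroups
  have hTmem : ∀ H : Subgroup G, H ∈ T ↔ IsCyclic H := by
    intro H
    simp only [hT, Finset.mem_image, Finset.mem_univ, true_and]
    constructor
    · rintro ⟨a, rfl⟩
      refine ⟨⟨⟨a, mem_zpowers a⟩, ?_⟩⟩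
      rintro ⟨x, hx⟩
      obtain ⟨k, hk⟩ := mem_zpowers_iff.mp hx
      exact mem_zpowers_iff.mpr ⟨k, Subtype.ext (by simpa using hk)⟩
    · intro hH
      obtain ⟨⟨g, hgH⟩, hg⟩ := hH.exists_generator
      refine ⟨g, le_antisymm (zpowers_le.mpr hgH) fun x hx => ?_⟩
      obtain ⟨k, hk⟩ := mem_zpowers_iff.mp (hg ⟨x, hx⟩)
      exact mem_zpowers_iff.mpr ⟨k, by simpa using congrArg Subtype.val hk⟩
  have hc : Nat.card {H : Subgroup G // IsCyclic H} = T.card := by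
    rw [Nat.card_eq_fintype_card, Fintype.card_subtype]
    congr 1
    ext H
    simp [hTmem]
  -- fiberwise decomposition
  have hsum : ∑ H ∈ T, ∑ x ∈ Finset.univ.filter (fun x => f x = H), w x = ∑ x, w x :=
    Finset.sum_fiberwise_of_maps_to (fun x _ => Finset.mem_image_of_mem f (Finset.mem_univ x)) w
  have hfib : ∀ H ∈ T, ∑ x ∈ Finset.univ.filter (fun x => f x = H), w x = 2 := by
    intro H hH
    obtain ⟨a, -, rfl⟩ := Finset.mem_image.mp hH
    rcases hord a with h1 | h1 | h1
    · have hset : Finset.univ.filter (fun x => f x = f a) = {a} := by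
        ext x
        simp only [Finset.mem_filter, Finset.mem_univ, true_and, Finset.mem_singleton, hf]
        exact fiber2 a (by rw [h1]; exact one_dvd 2) x
      rw [hset, Finset.sum_singleton, hw]
      simp [h1]
    · have hset : Finset.univ.filter (fun x => f x = f a) = {a} := by
        ext x
        simp only [Finset.mem_filter, Finset.mem_univ, true_and, Finset.mem_singleton, hf]
        exact fiber2 a (by rw [h1]) x
      rw [hset, Finset.sum_singleton, hw]
      simp [h1]
    · have hset : Finset.univ.filter (fun x => f x = f a) = {a, a ^ 3} := by
        ext x
        simp only [Finset.mem_filter, Finset.mem_univ, true_and, Finset.mem_insert,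
          Finset.mem_singleton, hf]
        exact fiber4 a h1 x
      have hane : a ≠ a ^ 3 := by
        intro h
        have h' : a ^ 2 * a = 1 * a := by
          rw [one_mul, ← pow_succ]; exact h.symm
        have h2 : a ^ 2 = 1 := mul_right_cancel h'
        have := orderOf_dvd_of_pow_eq_one h2
        rw [h1] at this
        omega
      have ho3 : orderOf (a ^ 3) = 4 := by
        have hz : zpowers (a ^ 3) = zpowers a := (fiber4 a h1 (a ^ 3)).mpr (Or.inr rfl)
        rw [← Nat.card_zpowers, hz, Nat.card_zpowers, h1]
      rw [hset, Finset.sum_pair hane, hw]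
      simp [h1, ho3]
  have h2c : 2 * T.card = ∑ x, w x := by
    calc 2 * T.card = ∑ _H ∈ T, 2 := by rw [Finset.sum_const, smul_eq_mul, mul_comm]
    _ = ∑ H ∈ T, ∑ x ∈ Finset.univ.filter (fun x => f x = H), w x :=
      (Finset.sum_congr rfl hfib).symm
    _ = ∑ x, w x := hsum
  -- element counts
  set s4 := (Finset.univ.filter (fun x : G => orderOf x = 4)).card with hs4
  set s2 := (Finset.univ.filter (fun x : G => orderOf x = 2)).card with hs2
  have hnot : (Finset.univ.filter (fun x : G => ¬ orderOf x = 4)).card = 1 + s2 := by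
    have hsplit : Finset.univ.filter (fun x : G => ¬ orderOf x = 4)
        = Finset.univ.filter (fun x : G => orderOf x = 1)
          ∪ Finset.univ.filter (fun x : G => orderOf x = 2) := by
      ext x
      simp only [Finset.mem_filter, Finset.mem_univ, true_and, Finset.mem_union]
      have := hord x
      omega
    have hdisj : Disjoint (Finset.univ.filter (fun x : G => orderOf x = 1))
        (Finset.univ.filter (fun x : G => orderOf x = 2)) := by
      rw [Finset.disjoint_left]
      intro x hx hx'
      simp only [Finset.mem_filter] at hx hx'
      omega
    have h1 : Finset.univ.filter (fun x : G => orderOf x = 1) = {1} := by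
      ext x
      simp [orderOf_eq_one_iff]
    rw [hsplit, Finset.card_union_of_disjoint hdisj, h1, Finset.card_singleton]
  have hwsum : ∑ x, w x = s4 + 2 * (1 + s2) := by
    rw [← Finset.sum_filter_add_sum_filter_not Finset.univ (fun x : G => orderOf x = 4) w]
    have e1 : ∑ x ∈ Finset.univ.filter (fun x : G => orderOf x = 4), w x = s4 := by
      rw [Finset.sum_congr rfl (fun x hx => ?_), Finset.sum_const, smul_eq_mul, mul_one]
      simp only [Finset.mem_filter] at hx
      simp [hw, hx.2]
    have e2 : ∑ x ∈ Finset.univ.filter (fun x : G => ¬ orderOf x = 4), w x = 2 * (1 + s2) := by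
      rw [Finset.sum_congr rfl (fun x hx => ?_), Finset.sum_const, smul_eq_mul, hnot, mul_comm]
      simp only [Finset.mem_filter] at hx
      simp [hw, hx.2]
    rw [e1, e2]
  have hGcard : s4 + (1 + s2) = 2 ^ n := by
    rw [← hcard, Nat.card_eq_fintype_card, ← hnot, hs4]
    rw [Finset.card_filter_add_card_filter_not, Finset.card_univ]
  have hn2 : Nat.card {x : G // orderOf x = 2} = s2 := by
    rw [Nat.card_eq_fintype_card, Fintype.card_subtype]
  have key : alpha G = 3 / 4 ↔ T.card * 4 = 3 * 2 ^ n := by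
    rw [alpha, hc, hcard]
    rw [div_eq_div_iff (by positivity) (by norm_num)]
    constructor <;> intro h <;> exact_mod_cast h
  rw [key, hn2]
  have hp : 2 ^ n = 2 * 2 ^ (n - 1) := by
    conv_lhs => rw [show n = (n - 1) + 1 by omega]
    rw [pow_succ]; ring
  have hge : 2 ≤ 2 ^ (n - 1) :=
    calc 2 = 2 ^ 1 := rfl
    _ ≤ 2 ^ (n - 1) := Nat.pow_le_pow_right (by norm_num) (by omega)
  omega
end

section
/- If G is a finite nilpotent group that is not a 2-group, then α(G) ≠ 3/4 (in fact, if G has a Sylow p-subgroup of odd order p^m > 1 then α(G) < 3/4). -/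
open Finset

section CyclicSubgroups

variable {G : Type*} [Group G]

open scoped Classical in
theorem two_le_card_generators_add_card_generators_sq_eq_one [Fintype G]
    (H : Subgroup G) (hH : IsCyclic H) :
    2 ≤ #{g | Subgroup.zpowers g = H} + #{g | g ^ 2 = 1 ∧ Subgroup.zpowers g = H} := by
  obtain ⟨g, rfl⟩ := (Subgroup.isCyclic_iff_exists_zpowers_eq_top H).mp hH
  by_cases hg : g ^ 2 = 1
  · have h₁ : 0 < #{x | Subgroup.zpowers x = Subgroup.zpowers g} :=
      card_pos.mpr ⟨g, by simp⟩
    have h₂ : 0 < #{x | x ^ 2 = 1 ∧ Subgroup.zpowers x = Subgroup.zpowers g} :=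
      card_pos.mpr ⟨g, by simp [hg]⟩
    omega
  · have hne : g ≠ g⁻¹ := fun h => hg (by rw [sq]; nth_rw 2 [h]; exact mul_inv_cancel g)
    have : 1 < #{x | Subgroup.zpowers x = Subgroup.zpowers g} :=
      one_lt_card.mpr ⟨g, by simp, g⁻¹, by simp, hne⟩
    omega

theorem two_mul_card_cyclic_subgroups_le [Finite G] :
    2 * Nat.card {H : Subgroup G // IsCyclic H} ≤ Nat.card {g : G // g ^ 2 = 1} + Nat.card G := by
  classical
  have := Fintype.ofFinite G
  let gen : G → {H : Subgroup G // IsCyclic H} := fun g => ⟨Subgroup.zpowers g, inferInstance⟩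
  have hG : Nat.card G = ∑ H, #{g | gen g = H} := by
    rw [Nat.card_eq_fintype_card, ← card_univ]
    exact card_eq_sum_card_fiberwise (f := gen) (t := univ) fun _ _ => mem_univ _
  have hT : Nat.card {g : G // g ^ 2 = 1} = ∑ H, #{g | g ^ 2 = 1 ∧ gen g = H} := by
    rw [Nat.card_eq_fintype_card, Fintype.card_subtype,
      card_eq_sum_card_fiberwise (f := gen) (t := univ) fun _ _ => mem_univ _]
    simp only [filter_filter]
  calc 2 * Nat.card {H : Subgroup G // IsCyclic H}
      = ∑ _H : {H : Subgroup G // IsCyclic H}, 2 := by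
        rw [sum_const, smul_eq_mul, mul_comm, card_univ, Nat.card_eq_fintype_card]
    _ ≤ ∑ H, (#{g | gen g = H} + #{g | g ^ 2 = 1 ∧ gen g = H}) := by
        refine sum_le_sum fun H _ => ?_
        simpa [gen, Subtype.ext_iff] using
          two_le_card_generators_add_card_generators_sq_eq_one H.1 H.2
    _ = Nat.card {g : G // g ^ 2 = 1} + Nat.card G := by
        rw [sum_add_distrib, hG, hT, add_comm]

end CyclicSubgroups

section Sylow

variable {G : Type*} [Group G]

theorem Sylow.le_of_normal {p : ℕ} [Fact p.Prime] [Finite (Sylow p G)] (P : Sylow p G) [P.Normal]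
    {H : Subgroup G} (hH : IsPGroup p H) : H ≤ P := by
  obtain ⟨Q, hHQ⟩ := hH.exists_le_sylow
  obtain ⟨g, hg⟩ := MulAction.exists_smul_eq G P Q
  rwa [← hg, Sylow.smul_eq_of_normal] at hHQ

theorem Sylow.mem_of_pow_eq_one {p : ℕ} [Fact p.Prime] [Finite (Sylow p G)] (P : Sylow p G)
    [P.Normal] {g : G} (hg : g ^ p = 1) : g ∈ P := by
  have hpow : IsPGroup p (Subgroup.zpowers g) := by
    rintro ⟨_, k, rfl⟩
    refine ⟨1, Subtype.ext ?_⟩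
    rw [pow_one, Subgroup.coe_pow, ← zpow_natCast, ← zpow_mul, mul_comm, zpow_mul, zpow_natCast, hg,
      one_zpow, Subgroup.coe_one]
  exact P.le_of_normal hpow (Subgroup.mem_zpowers g)

theorem Sylow.card_pow_eq_one_le_card [Finite G] {p : ℕ} [Fact p.Prime] (P : Sylow p G)
    [P.Normal] : Nat.card {g : G // g ^ p = 1} ≤ Nat.card P :=
  Nat.card_le_card_of_injective (fun g => (⟨g, P.mem_of_pow_eq_one g.2⟩ : P))
    fun _ _ h => Subtype.ext (Subtype.ext_iff.mp h :)

theorem Sylow.prime_mul_card_le_card [Finite G] {p q : ℕ} [Fact p.Prime] (P : Sylow p G)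
    (hq : q.Prime) (hqp : q ≠ p) (hdvd : q ∣ Nat.card G) : q * Nat.card P ≤ Nat.card G := by
  obtain ⟨n, hn⟩ := IsPGroup.iff_card.mp P.isPGroup'
  have hcop : q.Coprime (Nat.card P) :=
    hn ▸ ((Nat.coprime_primes hq Fact.out).mpr hqp).pow_right n
  rw [← (P : Subgroup G).card_mul_index] at hdvd ⊢
  rw [mul_comm q]
  exact Nat.mul_le_mul_left _ (Nat.le_of_dvd (Nat.pos_of_ne_zero Subgroup.index_ne_zero_of_finite)
    (hcop.dvd_of_dvd_mul_left hdvd))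

end Sylow

theorem exists_odd_prime_dvd_card_of_not_isPGroup_two {G : Type*} [Group G] [Finite G]
    (hG : ¬ IsPGroup 2 G) : ∃ p, p.Prime ∧ Odd p ∧ p ∣ Nat.card G := by
  by_contra! hodd
  exact hG <| IsPGroup.of_card <| Nat.eq_prime_pow_of_unique_prime_dvd Nat.card_pos.ne'
    fun hp hdvd => hp.eq_two_or_odd'.resolve_right fun h => hodd _ hp h hdvd

theorem alpha_le_two_thirds {G : Type*} [Group G] [Finite G] [Group.IsNilpotent G]
    {p : ℕ} (hp : p.Prime) (hodd : Odd p) (hdvd : p ∣ Nat.card G) : alpha G ≤ 2 / 3 := by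
  have := Fact.mk Nat.prime_two
  obtain ⟨P⟩ : Nonempty (Sylow 2 G) := inferInstance
  have hp3 : 3 ≤ p ∧ p ≠ 2 := by
    obtain ⟨k, rfl⟩ := hodd
    have := hp.two_le
    omega
  have hinvolutions : Nat.card {g : G // g ^ 2 = 1} ≤ Nat.card P := P.card_pow_eq_one_le_card
  have hsylow : 3 * Nat.card P ≤ Nat.card G :=
    (Nat.mul_le_mul_right _ hp3.1).trans (P.prime_mul_card_le_card hp hp3.2 hdvd)
  have hcyclic := two_mul_card_cyclic_subgroups_le (G := G)
  rw [alpha, div_le_div_iff₀ (by exact_mod_cast Nat.card_pos) (by norm_num)]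
  exact_mod_cast (by omega : Nat.card {H : Subgroup G // IsCyclic H} * 3 ≤ 2 * Nat.card G)

theorem stmt_8 (G : Type*) [Group G] [Finite G] (hnil : Group.IsNilpotent G) :
    (¬ IsPGroup 2 G → alpha G ≠ 3 / 4) ∧
    (∀ p : ℕ, p.Prime → Odd p → p ∣ Nat.card G → alpha G < 3 / 4) := by
  have alpha_lt {p : ℕ} (hp : p.Prime) (hodd : Odd p) (hdvd : p ∣ Nat.card G) : alpha G < 3 / 4 :=
    (alpha_le_two_thirds hp hodd hdvd).trans_lt (by norm_num)
  refine ⟨fun hG => ?_, fun p hp hodd hdvd => alpha_lt hp hodd hdvd⟩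
  obtain ⟨p, hp, hodd, hdvd⟩ := exists_odd_prime_dvd_card_of_not_isPGroup_two hG
  exact (alpha_lt hp hodd hdvd).ne
end

section
/- No finite extraspecial 2-group G satisfies α(G) = 3/4. -/
open Subgroup Finset
open scoped commutatorElement

section ExponentFour

variable {G : Type*} [Group G]

lemma eq_one_of_zpowers_sq_eq {g : G} (hg : g ^ 4 = 1) (h : zpowers (g ^ 2) = zpowers g) :
    g = 1 := by
  obtain ⟨m, hm⟩ := mem_zpowers_iff.1 (h ▸ mem_zpowers g)
  have hsq : (g ^ 2) ^ (2 : ℤ) = 1 := by rw [← hg]; group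
  rw [zpow_eq_zpow_emod m hsq] at hm
  rcases Int.emod_two_eq_zero_or_one m with hm2 | hm2 <;> rw [hm2] at hm
  · simpa using hm.symm
  · rw [zpow_one, pow_two] at hm
    simpa using hm

lemma zpowers_eq_zpowers_iff_of_pow_four {g x : G} (hg : g ^ 4 = 1) :
    zpowers x = zpowers g ↔ x = g ∨ x = g⁻¹ := by
  refine ⟨fun h => ?_, by rintro (rfl | rfl) <;> simp⟩
  obtain ⟨k, rfl⟩ := mem_zpowers_iff.1 (h ▸ mem_zpowers x)
  rw [zpow_eq_zpow_emod k (n := 4) (by exact_mod_cast hg)] at h ⊢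
  have hk : k % 4 = 0 ∨ k % 4 = 1 ∨ k % 4 = 2 ∨ k % 4 = 3 := by omega
  rcases hk with hk | hk | hk | hk <;> rw [hk] at h ⊢
  · have : g = 1 := by simpa using h.symm
    simp [this]
  · simp
  · have := eq_one_of_zpowers_sq_eq hg (by exact_mod_cast h)
    simp [this]
  · right
    exact eq_inv_of_mul_eq_one_left (by rw [← hg]; group)

open scoped Classical

lemma card_zpowers_fiber_add_card_zpowers_fiber_sq_eq_one [Fintype G] {g : G} (hg : g ^ 4 = 1) :
    #{x | zpowers x = zpowers g} + #{x | zpowers x = zpowers g ∧ x ^ 2 = 1} = 2 := by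
  have hfiber : ({x | zpowers x = zpowers g} : Finset G) = {g, g⁻¹} := by
    ext x; simp [zpowers_eq_zpowers_iff_of_pow_four hg]
  simp_rw [← filter_filter, hfiber]
  by_cases hg2 : g ^ 2 = 1
  · have : g⁻¹ = g := inv_eq_of_mul_eq_one_right (by rw [← pow_two, hg2])
    simp [this, filter_singleton, hg2]
  · have hne : g ≠ g⁻¹ := fun h => hg2 (by rw [pow_two]; nth_rw 2 [h]; simp)
    simp [hne, hg2]

theorem two_mul_card_isCyclic_subgroups [Finite G] (hG : ∀ g : G, g ^ 4 = 1) :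
    2 * Nat.card {H : Subgroup G // IsCyclic H} = Nat.card G + Nat.card {g : G // g ^ 2 = 1} := by
  have := Fintype.ofFinite G
  set L := (univ : Finset G).image zpowers
  have hL : Nat.card {H : Subgroup G // IsCyclic H} = #L := by
    rw [← Nat.card_eq_finsetCard]
    exact Nat.card_congr <| Equiv.subtypeEquivRight fun H => by
      simp [L, H.isCyclic_iff_exists_zpowers_eq_top]
  have hfibers := card_eq_sum_card_image zpowers (univ : Finset G)
  have hsq_fibers := card_eq_sum_card_fiberwise (f := zpowers) (t := L)
    (s := {g | g ^ 2 = 1}) fun g _ => mem_image_of_mem _ (mem_univ g)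
  rw [hL, Nat.card_eq_fintype_card, Nat.card_eq_fintype_card, Fintype.card_subtype, ← card_univ,
    hfibers, hsq_fibers, ← sum_add_distrib, mul_comm, ← smul_eq_mul, ← sum_const]
  refine sum_congr rfl fun H hH => ?_
  obtain ⟨g, -, rfl⟩ := mem_image.1 hH
  simpa [filter_filter, and_comm] using
    (card_zpowers_fiber_add_card_zpowers_fiber_sq_eq_one (hG g)).symm

end ExponentFour

section ClassTwo

variable {G : Type*} [Group G]

lemma commutatorElement_mul_right_of_mem_center {u g h : G} (hh : ⁅u, h⁆ ∈ center G) :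
    ⁅u, g * h⁆ = ⁅u, h⁆ * ⁅u, g⁆ := by
  have hcomm := mem_center_iff.1 hh (u * g * u⁻¹)
  simp only [commutatorElement_def] at hcomm ⊢
  calc u * (g * h) * u⁻¹ * (g * h)⁻¹ = (u * g * u⁻¹) * (u * h * u⁻¹ * h⁻¹) * g⁻¹ := by group
    _ = u * h * u⁻¹ * h⁻¹ * (u * g * u⁻¹ * g⁻¹) := by rw [hcomm]; group

lemma mul_sq_of_commutatorElement_mem_center {g u : G} (h : ⁅u, g⁆ ∈ center G) :
    (g * u) ^ 2 = ⁅u, g⁆ * g ^ 2 * u ^ 2 := by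
  have hcomm := mem_center_iff.1 h g
  calc (g * u) ^ 2 = g * ⁅u, g⁆ * g * u ^ 2 := by
        rw [commutatorElement_def, pow_two, pow_two]; group
    _ = ⁅u, g⁆ * g ^ 2 * u ^ 2 := by rw [hcomm]; group

lemma commutatorElement_mem_center (hc : commutator G ≤ center G) (g h : G) :
    ⁅g, h⁆ ∈ center G :=
  hc (commutator_mem_commutator (mem_top g) (mem_top h))

lemma sq_eq_one_of_mem_center (hZ : Nat.card (center G) = 2) {z : G} (hz : z ∈ center G) :
    z ^ 2 = 1 := by
  have h : (⟨z, hz⟩ : center G) ^ 2 = 1 := hZ ▸ pow_card_eq_one'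
  simpa [Subtype.ext_iff] using h

lemma eq_of_mem_center_of_ne_one (hZ : Nat.card (center G) = 2) {a b : G}
    (ha : a ∈ center G) (hb : b ∈ center G) (ha1 : a ≠ 1) (hb1 : b ≠ 1) : a = b := by
  obtain ⟨z, -, hz⟩ := (Nat.card_eq_two_iff' (1 : center G)).1 hZ
  have haz := hz ⟨a, ha⟩ (by simpa [Subtype.ext_iff] using ha1)
  have hbz := hz ⟨b, hb⟩ (by simpa [Subtype.ext_iff] using hb1)
  simpa [Subtype.ext_iff] using haz.trans hbz.symm

lemma sq_mem_center (hc : commutator G ≤ center G) (hZ : Nat.card (center G) = 2) (g : G) :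
    g ^ 2 ∈ center G := by
  refine mem_center_iff.2 fun y => ?_
  have hyg := commutatorElement_mem_center hc y g
  have h : ⁅y, g ^ 2⁆ = 1 := by
    rw [pow_two, commutatorElement_mul_right_of_mem_center hyg, ← pow_two,
      sq_eq_one_of_mem_center hZ hyg]
  exact commutatorElement_eq_one_iff_commute.1 h

lemma pow_four_eq_one (hc : commutator G ≤ center G) (hZ : Nat.card (center G) = 2) (g : G) :
    g ^ 4 = 1 := by
  rw [show g ^ 4 = (g ^ 2) ^ 2 by group, sq_eq_one_of_mem_center hZ (sq_mem_center hc hZ g)]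

open scoped Classical

/-- On a center of order 2 this is its nontrivial character `Z(G) → {±1}`. -/
noncomputable def centerSign (g : G) : ℤ := if g = 1 then 1 else -1

@[simp] lemma centerSign_one : centerSign (1 : G) = 1 := if_pos rfl

lemma centerSign_of_ne_one {g : G} (h : g ≠ 1) : centerSign g = -1 := if_neg h

lemma centerSign_mul_self (g : G) : centerSign g * centerSign g = 1 := by
  by_cases h : g = 1 <;> simp [centerSign, h]

lemma centerSign_mul (hZ : Nat.card (center G) = 2) {a b : G} (ha : a ∈ center G)
    (hb : b ∈ center G) : centerSign (a * b) = centerSign a * centerSign b := by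
  by_cases ha1 : a = 1
  · simp [ha1]
  by_cases hb1 : b = 1
  · simp [hb1]
  obtain rfl := eq_of_mem_center_of_ne_one hZ ha hb ha1 hb1
  rw [← pow_two, sq_eq_one_of_mem_center hZ ha, centerSign_mul_self, centerSign_one]

noncomputable def commutatorSignHom (hc : commutator G ≤ center G)
    (hZ : Nat.card (center G) = 2) (u : G) : G →* ℤ where
  toFun g := centerSign ⁅u, g⁆
  map_one' := by simp
  map_mul' g h := by
    rw [commutatorElement_mul_right_of_mem_center (commutatorElement_mem_center hc u h),
      centerSign_mul hZ (commutatorElement_mem_center hc u h) (commutatorElement_mem_center hc u g),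
      mul_comm]

variable [Fintype G]

lemma sum_centerSign_commutatorElement (hc : commutator G ≤ center G)
    (hZ : Nat.card (center G) = 2) (u : G) :
    ∑ g : G, centerSign ⁅u, g⁆ = if u ∈ center G then (Nat.card G : ℤ) else 0 := by
  split_ifs with hu
  · have h1 : ∀ g : G, ⁅u, g⁆ = 1 := fun g =>
      commutatorElement_eq_one_iff_commute.2 (mem_center_iff.1 hu g).symm
    simp [h1, Nat.card_eq_fintype_card]
  · refine sum_hom_units_eq_zero (commutatorSignHom hc hZ u) fun h1 => hu ?_
    refine mem_center_iff.2 fun g => (commutatorElement_eq_one_iff_commute.1 ?_).symm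
    by_contra hne
    have := DFunLike.congr_fun h1 g
    simp [commutatorSignHom, centerSign_of_ne_one hne] at this

theorem sum_centerSign_sq_mul_self (hc : commutator G ≤ center G)
    (hZ : Nat.card (center G) = 2) :
    (∑ g : G, centerSign (g ^ 2)) * ∑ g : G, centerSign (g ^ 2) = 2 * Nat.card G := by
  have hsq := sq_mem_center hc hZ
  calc (∑ g : G, centerSign (g ^ 2)) * ∑ h : G, centerSign (h ^ 2)
      = ∑ g : G, ∑ u : G, centerSign (g ^ 2) * centerSign ((g * u) ^ 2) := by
        rw [sum_mul_sum]
        exact sum_congr rfl fun g _ => (Equiv.sum_comp (Equiv.mulLeft g) _).symm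
    _ = ∑ u : G, centerSign (u ^ 2) * ∑ g : G, centerSign ⁅u, g⁆ := by
        rw [sum_comm]
        refine sum_congr rfl fun u _ => ?_
        rw [mul_sum]
        refine sum_congr rfl fun g _ => ?_
        have hug := commutatorElement_mem_center hc u g
        rw [mul_sq_of_commutatorElement_mem_center hug,
          centerSign_mul hZ (mul_mem hug (hsq g)) (hsq u), centerSign_mul hZ hug (hsq g)]
        linear_combination (centerSign (u ^ 2) * centerSign ⁅u, g⁆) * centerSign_mul_self (g ^ 2)
    _ = ∑ u : G, if u ∈ center G then (Nat.card G : ℤ) else 0 := by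
        refine sum_congr rfl fun u _ => ?_
        rw [sum_centerSign_commutatorElement hc hZ u]
        split_ifs with hu
        · rw [sq_eq_one_of_mem_center hZ hu, centerSign_one, one_mul]
        · rw [mul_zero]
    _ = 2 * Nat.card G := by
        rw [← sum_filter, sum_const, nsmul_eq_mul, ← Fintype.card_subtype,
          ← Nat.card_eq_fintype_card]
        exact congrArg (fun n : ℕ => (n : ℤ) * Nat.card G) hZ

lemma sum_centerSign_sq :
    ∑ g : G, centerSign (g ^ 2) = 2 * Nat.card {g : G // g ^ 2 = 1} - Nat.card G := by
  have hsplit := card_filter_add_card_filter_not (s := univ) (fun g : G => g ^ 2 = 1)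
  rw [Nat.card_eq_fintype_card, Fintype.card_subtype, Nat.card_eq_fintype_card, ← card_univ,
    ← hsplit]
  simp only [centerSign, sum_ite, sum_const, nsmul_eq_mul]
  push_cast
  ring

end ClassTwo

theorem card_ne_two_mul_card_sq_eq_one {G : Type*} [Group G] [Finite G]
    (hc : commutator G ≤ center G) (hZ : Nat.card (center G) = 2) :
    Nat.card G ≠ 2 * Nat.card {g : G // g ^ 2 = 1} := by
  have := Fintype.ofFinite G
  intro h
  have hgauss := sum_centerSign_sq_mul_self hc hZ
  rw [sum_centerSign_sq, h] at hgauss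
  push_cast at hgauss
  have := Nat.card_pos (α := G)
  omega

theorem stmt_9_general (G : Type*) [Group G] [Finite G]
    (h1 : commutator G = frattini G) (h2' : frattini G = Subgroup.center G)
    (h3 : Nat.card (Subgroup.center G) = 2) :
    alpha G ≠ 3 / 4 := by
  have hc : commutator G ≤ center G := (h1.trans h2').le
  have hcount := two_mul_card_isCyclic_subgroups (pow_four_eq_one hc h3)
  have hG := card_ne_two_mul_card_sq_eq_one hc h3
  intro hα
  have hα' : Nat.card {H : Subgroup G // IsCyclic H} * 4 = 3 * Nat.card G := by
    rw [alpha, div_eq_div_iff (Nat.cast_ne_zero.2 Nat.card_pos.ne') (by norm_num)] at hα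
    exact_mod_cast hα
  omega

/-- A 2-group `G` is extraspecial if `G' = Φ(G) = Z(G) ≅ ℤ/2`. -/
theorem stmt_9 (G : Type*) [Group G] [Finite G] (h2 : IsPGroup 2 G)
    (h1 : commutator G = frattini G) (h2' : frattini G = Subgroup.center G)
    (h3 : Nat.card (Subgroup.center G) = 2) :
    alpha G ≠ 3 / 4 :=
  stmt_9_general G h1 h2' h3
end

section
/- Every finite almost extraspecial 2-group G satisfies α(G) = 3/4. -/
section Aux
variable {G : Type*} [Group G]

lemma aux_isCyclic_zpowers (g : G) : IsCyclic (Subgroup.zpowers g) := by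
  refine ⟨⟨⟨g, Subgroup.mem_zpowers g⟩, fun x => ?_⟩⟩
  obtain ⟨k, hk⟩ := Subgroup.mem_zpowers_iff.mp x.2
  exact ⟨k, Subtype.ext (by simpa using hk)⟩

lemma aux_orderOf_eq_four {g : G} (h4 : g ^ 4 = 1) (h2 : g ^ 2 ≠ 1) : orderOf g = 4 := by
  have hd : orderOf g ∣ 4 := orderOf_dvd_iff_pow_eq_one.mpr h4
  have h1 : orderOf g ≠ 1 := fun h => h2 (by rw [orderOf_eq_one_iff.mp h]; simp)
  have hO2 : orderOf g ≠ 2 := fun h => h2 (h ▸ pow_orderOf_eq_one g)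
  have hle : orderOf g ≤ 4 := Nat.le_of_dvd (by norm_num) hd
  interval_cases h : orderOf g <;> first | rfl | omega | simp_all

lemma aux_mem_sq_one {g x : G} (hg : g ^ 2 = 1) (hx : x ∈ Subgroup.zpowers g) :
    x = 1 ∨ x = g := by
  obtain ⟨k, rfl⟩ := Subgroup.mem_zpowers_iff.mp hx
  have hz : g ^ (2 : ℤ) = 1 := by exact_mod_cast hg
  rcases Int.even_or_odd k with ⟨m, hm⟩ | ⟨m, hm⟩
  · left
    rw [hm, show m + m = 2 * m by ring, zpow_mul, hz, one_zpow]
  · right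
    rw [hm, zpow_add, zpow_mul, hz, one_zpow, one_mul, zpow_one]

lemma aux_mem_order_four {g x : G} (hg : orderOf g = 4) (hx : x ∈ Subgroup.zpowers g) :
    x = 1 ∨ x = g ∨ x = g ^ 2 ∨ x = g⁻¹ := by
  obtain ⟨k, rfl⟩ := Subgroup.mem_zpowers_iff.mp hx
  have h1 : g ^ (k % 4) = g ^ k := by
    have := zpow_mod_orderOf g k
    rwa [hg] at this
  have hk0 : 0 ≤ k % 4 := Int.emod_nonneg k (by norm_num)
  have hk4 : k % 4 < 4 := Int.emod_lt_of_pos k (by norm_num)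
  have g4 : g ^ (4 : ℤ) = 1 := by
    have : g ^ 4 = 1 := by rw [← hg]; exact pow_orderOf_eq_one g
    exact_mod_cast this
  rw [← h1]
  have hc : k % 4 = 0 ∨ k % 4 = 1 ∨ k % 4 = 2 ∨ k % 4 = 3 := by omega
  rcases hc with h | h | h | h <;> rw [h]
  · exact Or.inl (zpow_zero g)
  · exact Or.inr (Or.inl (zpow_one g))
  · refine Or.inr (Or.inr (Or.inl ?_)); exact_mod_cast rfl
  · refine Or.inr (Or.inr (Or.inr ?_))
    rw [show (3 : ℤ) = 4 + (-1) by norm_num, zpow_add, g4, one_mul, zpow_neg_one]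

end Aux

lemma aux_sq_mem_frattini {G : Type*} [Group G] [Finite G] (h2 : IsPGroup 2 G) (x : G) :
    x ^ 2 ∈ frattini G := by
  haveI : Fact (Nat.Prime 2) := ⟨Nat.prime_two⟩
  haveI : Group.IsNilpotent G := h2.isNilpotent
  have hnc : NormalizerCondition G := normalizerCondition_of_isNilpotent
  rw [frattini, Order.radical]
  refine Subgroup.mem_iInf.mpr fun M => Subgroup.mem_iInf.mpr fun hM => ?_
  haveI : M.Normal := Subgroup.NormalizerCondition.normal_of_coatom M hnc hM
  set f := QuotientGroup.mk' M with hf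
  have key : ∀ N : Subgroup (G ⧸ M), N = ⊥ ∨ N = ⊤ := by
    intro N
    have hMle : M ≤ Subgroup.comap f N := by
      intro m hm
      have h1 : f m = 1 := (QuotientGroup.eq_one_iff m).mpr hm
      refine Subgroup.mem_comap.mpr ?_
      rw [h1]; exact N.one_mem
    rcases hMle.lt_or_eq with hlt | heq
    · right
      have htop : Subgroup.comap f N = ⊤ := hM.2 _ hlt
      have hh := Subgroup.map_comap_eq_self_of_surjective
        (QuotientGroup.mk'_surjective M) N
      rw [htop] at hh
      rw [← hh]
      exact Subgroup.map_top_of_surjective f (QuotientGroup.mk'_surjective M)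
    · left
      have hh := Subgroup.map_comap_eq_self_of_surjective
        (QuotientGroup.mk'_surjective M) N
      rw [← heq] at hh
      rw [← hh]
      refine le_bot_iff.mp ?_
      rintro _ ⟨m, hm, rfl⟩
      simpa using (QuotientGroup.eq_one_iff m).mpr hm
  have hq : f x ^ 2 = 1 := by
    by_contra hne
    have hzp : Subgroup.zpowers (f x ^ 2) = ⊤ :=
      (key _).resolve_left (by simpa [Subgroup.zpowers_eq_bot] using hne)
    have hmem : f x ∈ Subgroup.zpowers (f x ^ 2) := hzp ▸ Subgroup.mem_top _
    obtain ⟨k, hk⟩ := Subgroup.mem_zpowers_iff.mp hmem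
    have hzeq : (f x) ^ (2 * k - 1) = 1 := by
      have hstep : (f x) ^ (2 * k - 1 : ℤ) = ((f x) ^ (2 : ℕ)) ^ k * (f x)⁻¹ := by
        rw [← zpow_natCast (f x) 2, ← zpow_mul]
        rw [show (2 : ℤ) * k - 1 = (2 : ℕ) * k + (-1) by push_cast; ring, zpow_add, zpow_neg_one]
      rw [hstep, hk, mul_inv_cancel]
    have hdvd : (orderOf (f x) : ℤ) ∣ 2 * k - 1 := orderOf_dvd_iff_zpow_eq_one.mpr hzeq
    obtain ⟨m, hm⟩ := (IsPGroup.iff_orderOf.mp (h2.to_quotient M)) (f x)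
    rcases Nat.eq_zero_or_pos m with rfl | hmpos
    · have hfx : f x = 1 := orderOf_eq_one_iff.mp (by simpa using hm)
      exact hne (by rw [hfx]; simp)
    · have h2dvd : (2 : ℤ) ∣ (orderOf (f x) : ℤ) := by
        rw [hm]; exact_mod_cast dvd_pow_self 2 hmpos.ne'
      obtain ⟨j, hj⟩ := h2dvd.trans hdvd
      omega
  have hfx2 : f (x ^ 2) = 1 := by rw [map_pow, hq]
  exact (QuotientGroup.eq_one_iff _).mp hfx2

lemma aux_card_split {α : Type*} [Finite α] (q : α → Prop) :
    Nat.card α = Nat.card {x // q x} + Nat.card {x // ¬ q x} := by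
  classical
  rw [← Nat.card_sum]
  exact (Nat.card_congr (Equiv.sumCompl q)).symm

open scoped Classical in
noncomputable def auxGen {G : Type*} [Group G] (H : Subgroup G) : G :=
  if h : ∃ g : G, Subgroup.zpowers g = H then h.choose else 1

lemma auxGen_spec {G : Type*} [Group G] {H : Subgroup G}
    (h : ∃ g : G, Subgroup.zpowers g = H) :
    Subgroup.zpowers (auxGen H) = H := by
  classical
  rw [auxGen]
  rw [dif_pos h]
  exact h.choose_spec

lemma aux_exists_gen {G : Type*} [Group G] [Finite G] (H : Subgroup G) (hH : IsCyclic H) :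
    ∃ g : G, Subgroup.zpowers g = H := by
  haveI := hH
  obtain ⟨g, hg⟩ := IsCyclic.exists_generator (α := H)
  refine ⟨g, le_antisymm (Subgroup.zpowers_le.mpr g.2) fun y hy => ?_⟩
  obtain ⟨k, hk⟩ := Subgroup.mem_zpowers_iff.mp (hg ⟨y, hy⟩)
  refine ⟨k, ?_⟩
  show (g : G) ^ k = y
  rw [← SubgroupClass.coe_zpow]
  exact congrArg Subtype.val hk

/-- A 2-group `G` is almost extraspecial if `G' = Φ(G) ≅ ℤ/2` and `Z(G) ≅ ℤ/4`. -/
theorem stmt_10 (G : Type*) [Group G] [Finite G] (h2 : IsPGroup 2 G)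
    (h1 : commutator G = frattini G) (h3 : Nat.card (commutator G) = 2)
    (h4 : IsCyclic (Subgroup.center G)) (h5 : Nat.card (Subgroup.center G) = 4) :
    alpha G = 3 / 4 := by
  classical
  haveI : Finite (Subgroup G) := Finite.of_injective (fun H => (H : Set G)) SetLike.coe_injective
  -- a generator of the center
  obtain ⟨w, hw⟩ := @IsCyclic.exists_generator _ _ h4
  have hworder : orderOf w = 4 := (orderOf_eq_card_of_forall_mem_zpowers hw).trans h5
  set z : G := (w : G) with hzdef
  have hzc : ∀ g : G, g * z = z * g := fun g => Subgroup.mem_center_iff.mp w.2 g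
  have hz4 : z ^ 4 = 1 := by
    have hww : w ^ 4 = 1 := by rw [← hworder]; exact pow_orderOf_eq_one w
    have := congrArg (Subtype.val) hww
    simpa using this
  have hz2 : z ^ 2 ≠ 1 := by
    intro h
    have hww : w ^ 2 = 1 := Subtype.ext (by simpa using h)
    have := orderOf_dvd_iff_pow_eq_one.mpr hww
    rw [hworder] at this
    norm_num at this
  -- the unique nontrivial element of the commutator subgroup
  have h3' := h3
  rw [Nat.card_eq_two_iff' (1 : commutator G)] at h3'
  obtain ⟨c₀, hc₀ne, hc₀uniq⟩ := h3'
  set c : G := (c₀ : G) with hcdef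
  have hcmem : c ∈ commutator G := c₀.2
  have hcne : c ≠ 1 := fun h => hc₀ne (Subtype.ext h)
  have huniq : ∀ d, d ∈ commutator G → d ≠ 1 → d = c := by
    intro d hd hdne
    have := hc₀uniq ⟨d, hd⟩ (fun h => hdne (congrArg Subtype.val h))
    exact congrArg Subtype.val this
  have hccentral : c ∈ Subgroup.center G := by
    rw [Subgroup.mem_center_iff]
    intro g
    have hconj : g * c * g⁻¹ ∈ commutator G :=
      Subgroup.Normal.conj_mem inferInstance c hcmem g
    have hconjne : g * c * g⁻¹ ≠ 1 := by
      intro h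
      apply hcne
      have : c = g⁻¹ * (g * c * g⁻¹) * g := by group
      rw [h] at this
      simpa using this
    have heqc := huniq _ hconj hconjne
    calc g * c = (g * c * g⁻¹) * g := by group
    _ = c * g := by rw [heqc]
  have hc2 : c ^ 2 = 1 := by
    have hdvd := Subgroup.orderOf_dvd_natCard (commutator G) hcmem
    rw [h3] at hdvd
    exact orderOf_dvd_iff_pow_eq_one.mp hdvd
  have hzo : orderOf z = 4 := aux_orderOf_eq_four hz4 hz2
  have hcz : c = z ^ 2 := by
    obtain ⟨k, hk⟩ := Subgroup.mem_zpowers_iff.mp (hw ⟨c, hccentral⟩)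
    have hkz : z ^ k = c := by
      rw [← SubgroupClass.coe_zpow]
      exact congrArg Subtype.val hk
    have hmem : c ∈ Subgroup.zpowers z := ⟨k, hkz⟩
    rcases aux_mem_order_four hzo hmem with h | h | h | h
    · exact absurd h hcne
    · exact absurd (h ▸ hc2) hz2
    · exact h
    · exfalso
      apply hz2
      rw [h] at hc2
      rw [inv_pow] at hc2
      exact inv_eq_one.mp hc2
  -- the square dichotomy
  have hsq : ∀ x : G, x ^ 2 = 1 ∨ x ^ 2 = z ^ 2 := by
    intro x
    have hx2 : x ^ 2 ∈ commutator G := by rw [h1]; exact aux_sq_mem_frattini h2 x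
    rcases eq_or_ne (x ^ 2) 1 with h | h
    · exact Or.inl h
    · exact Or.inr ((huniq _ hx2 h).trans hcz)
  have hx4 : ∀ x : G, x ^ 4 = 1 := by
    intro x
    have : x ^ 4 = (x ^ 2) ^ 2 := by rw [← pow_mul]
    rcases hsq x with h | h
    · rw [this, h, one_pow]
    · rw [this, h, ← pow_mul]
      exact hz4
  -- counting
  set p : {H : Subgroup G // IsCyclic H} → Prop := fun t => ∀ h ∈ t.1, h ^ 2 = 1 with hp
  -- s = number of solutions of x^2 = 1
  set s := Nat.card {x : G // x ^ 2 = 1} with hs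
  -- bijection 1 : involutions-and-identity with "small" cyclic subgroups
  have e1 : s = Nat.card {t // p t} := by
    refine Nat.card_eq_of_bijective
      (fun x => ⟨⟨Subgroup.zpowers x.1, aux_isCyclic_zpowers x.1⟩, fun h hh => by
        rcases aux_mem_sq_one x.2 hh with rfl | rfl
        · simp
        · exact x.2⟩) ⟨?_, ?_⟩
    · intro x y hxy
      have hzp : Subgroup.zpowers x.1 = Subgroup.zpowers y.1 := by
        have := congrArg (fun t => t.1.1) hxy
        simpa using this
      have hyx : y.1 ∈ Subgroup.zpowers x.1 := by
        rw [hzp]; exact Subgroup.mem_zpowers y.1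
      rcases aux_mem_sq_one x.2 hyx with h | h
      · have hx1 : x.1 = 1 := Subgroup.zpowers_eq_bot.mp
          (by rw [hzp, h, Subgroup.zpowers_one_eq_bot])
        exact Subtype.ext (by rw [hx1, h])
      · exact Subtype.ext h.symm
    · intro t
      obtain ⟨g, hg⟩ := aux_exists_gen t.1.1 t.1.2
      have hgmem : g ∈ t.1.1 := by rw [← hg]; exact Subgroup.mem_zpowers g
      refine ⟨⟨g, t.2 g hgmem⟩, ?_⟩
      exact Subtype.ext (Subtype.ext hg)
  -- basic facts about auxGen on "large" cyclic subgroups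
  have genfact : ∀ t : {t : {H : Subgroup G // IsCyclic H} // ¬ p t},
      Subgroup.zpowers (auxGen t.1.1) = t.1.1 ∧ (auxGen t.1.1) ^ 2 ≠ 1 := by
    intro t
    have hgen : Subgroup.zpowers (auxGen t.1.1) = t.1.1 :=
      auxGen_spec (aux_exists_gen t.1.1 t.1.2)
    refine ⟨hgen, fun hsq1 => t.2 ?_⟩
    intro y hy
    rw [← hgen] at hy
    rcases aux_mem_sq_one hsq1 hy with rfl | rfl
    · simp
    · exact hsq1
  -- bijection 2 : each "large" cyclic subgroup has exactly two generators
  have key2 : ∀ (u : {t : {H : Subgroup G // IsCyclic H} // ¬ p t}) (b : Bool),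
      Subgroup.zpowers (if b then auxGen u.1.1 else (auxGen u.1.1)⁻¹) = u.1.1 := by
    intro u b
    obtain ⟨hg, _⟩ := genfact u
    cases b
    · simpa [Subgroup.zpowers_inv] using hg
    · simpa using hg
  have e2 : Nat.card ({t : {H : Subgroup G // IsCyclic H} // ¬ p t} × Bool)
      = Nat.card {x : G // ¬ x ^ 2 = 1} := by
    refine Nat.card_eq_of_bijective
      (fun tb => ⟨if tb.2 then auxGen tb.1.1.1 else (auxGen tb.1.1.1)⁻¹, ?_⟩) ⟨?_, ?_⟩
    · rcases tb with ⟨t, b⟩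
      obtain ⟨hgen, hg2⟩ := genfact t
      have hg2i : ((auxGen t.1.1)⁻¹) ^ 2 ≠ 1 := by
        rw [inv_pow]
        exact fun hcon => hg2 (inv_eq_one.mp hcon)
      cases b
      · simpa using hg2i
      · simpa using hg2
    · rintro ⟨t, b⟩ ⟨t', b'⟩ hval
      have hv : (if b then auxGen t.1.1 else (auxGen t.1.1)⁻¹)
          = (if b' then auxGen t'.1.1 else (auxGen t'.1.1)⁻¹) :=
        congrArg Subtype.val hval
      have hzpe : t.1.1 = t'.1.1 := by rw [← key2 t b, ← key2 t' b', hv]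
      have ht : t = t' := Subtype.ext (Subtype.ext hzpe)
      subst ht
      obtain ⟨hgen, hg2⟩ := genfact t
      have hb : b = b' := by
        cases b <;> cases b' <;>
          simp only [if_true, Bool.false_eq_true, if_false] at hv ⊢
        · exfalso
          exact hg2 (by rw [pow_two]; exact eq_inv_iff_mul_eq_one.mp hv.symm)
        · exfalso
          exact hg2 (by rw [pow_two]; exact eq_inv_iff_mul_eq_one.mp hv)
      rw [hb]
    · rintro ⟨x, hx⟩
      have hcyc := aux_isCyclic_zpowers x
      have hnp : ¬ p ⟨Subgroup.zpowers x, hcyc⟩ := by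
        intro hpt
        exact hx (hpt x (Subgroup.mem_zpowers x))
      set t : {t : {H : Subgroup G // IsCyclic H} // ¬ p t} :=
        ⟨⟨Subgroup.zpowers x, hcyc⟩, hnp⟩ with htdef
      obtain ⟨hgen, hg2⟩ := genfact t
      have hgo : orderOf (auxGen t.1.1) = 4 := aux_orderOf_eq_four (hx4 _) hg2
      have hxg : x ∈ Subgroup.zpowers (auxGen t.1.1) := by
        rw [hgen]
        exact Subgroup.mem_zpowers x
      rcases aux_mem_order_four hgo hxg with h | h | h | h
      · exact absurd (by rw [h, one_pow]) hx
      · refine ⟨⟨t, true⟩, Subtype.ext ?_⟩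
        simp only [if_true]
        exact h.symm
      · exfalso
        apply hx
        rw [h, ← pow_mul]
        exact hx4 _
      · refine ⟨⟨t, false⟩, Subtype.ext ?_⟩
        simp only [Bool.false_eq_true, if_false]
        exact h.symm
  -- bijection 3 : multiplication by z swaps solutions and non-solutions of x^2 = 1
  have e3 : s = Nat.card {x : G // ¬ x ^ 2 = 1} := by
    refine Nat.card_eq_of_bijective (fun x => ⟨x.1 * z, ?_⟩) ⟨?_, ?_⟩
    · have hcomm : Commute x.1 z := hzc x.1
      rw [hcomm.mul_pow, x.2, one_mul]
      exact hz2
    · intro x y hxy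
      have := congrArg Subtype.val hxy
      simp only at this
      exact Subtype.ext (mul_right_cancel this)
    · rintro ⟨y, hy⟩
      have hcomm : Commute y z⁻¹ := (Commute.inv_right (hzc y))
      have hy2 : y ^ 2 = z ^ 2 := (hsq y).resolve_left hy
      refine ⟨⟨y * z⁻¹, ?_⟩, ?_⟩
      · rw [hcomm.mul_pow, hy2, inv_pow, mul_inv_cancel]
      · exact Subtype.ext (by simp)
  -- arithmetic conclusion
  set m := Nat.card {t : {H : Subgroup G // IsCyclic H} // ¬ p t} with hm
  have hprod : Nat.card ({t : {H : Subgroup G // IsCyclic H} // ¬ p t} × Bool) = m * 2 := by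
    have hb2 : Nat.card Bool = 2 := by
      rw [Nat.card_eq_fintype_card, Fintype.card_bool]
    rw [Nat.card_prod, hb2]
  have hms : m * 2 = s := by rw [← hprod, e2, ← e3]
  have hsplitG : Nat.card G = s + s := by
    have := aux_card_split (fun x : G => x ^ 2 = 1)
    rw [← e3] at this
    exact this
  have hsplitT : Nat.card {H : Subgroup G // IsCyclic H} = s + m := by
    have := aux_card_split p
    rw [← e1] at this
    exact this
  have hGpos : 0 < Nat.card G := Nat.card_pos
  have hmpos : 0 < m := by omega
  have hT3 : Nat.card {H : Subgroup G // IsCyclic H} = 3 * m := by omega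
  have hG4 : Nat.card G = 4 * m := by omega
  rw [alpha, hT3, hG4]
  have hmq : (m : ℚ) ≠ 0 := by exact_mod_cast hmpos.ne'
  push_cast
  rw [div_eq_div_iff (by positivity) (by norm_num)]
  ring
end

section
/- A generalized dicyclic 2-group Dic_{2^n}(A) satisfies α(Dic_{2^n}(A)) = 3/4 if and only if A ≅ (Z/2)^{n-1}, in which case Dic_{2^n}(A) ≅ (Z/2)^{n-2} × Z/4. -/
open Subgroup

section ElementaryAbelian

variable {E : Type*} [Group E]

abbrev commGroupOfSqEqOne (hE : ∀ x : E, x ^ 2 = 1) : CommGroup E where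
  mul_comm a b :=
    (Commute.of_orderOf_dvd_two (fun g => orderOf_dvd_of_pow_eq_one (hE g)) a b).eq

lemma nonempty_mulEquiv_of_sq_eq_one [Finite E] {k : ℕ} (hE : ∀ x : E, x ^ 2 = 1)
    (hcard : Nat.card E = 2 ^ k) : Nonempty (E ≃* Multiplicative (Fin k → ZMod 2)) := by
  let _ := commGroupOfSqEqOne hE
  let _ : Module (ZMod 2) (Additive E) := AddCommGroup.zmodModule fun x => hE x.toMul
  have hrank : Module.finrank (ZMod 2) (Additive E) = k := by
    have h := Module.natCard_eq_pow_finrank (K := ZMod 2) (V := Additive E)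
    rw [Nat.card_zmod, Nat.card_congr Additive.toMul, hcard] at h
    exact (Nat.pow_right_injective le_rfl h).symm
  exact ⟨AddEquiv.toMultiplicativeRight
    (Module.finBasisOfFinrankEq (ZMod 2) (Additive E) hrank).equivFun.toAddEquiv⟩

lemma exists_subgroup_notMem_card_mul_two (hE : ∀ x : E, x ^ 2 = 1) {v : E} (hv : v ≠ 1) :
    ∃ W : Subgroup E, v ∉ W ∧ Nat.card W * 2 = Nat.card E := by
  let _ := commGroupOfSqEqOne hE
  let _ : Module (ZMod 2) (Additive E) := AddCommGroup.zmodModule fun x => hE x.toMul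
  have hv' : Additive.ofMul v ≠ 0 := hv
  obtain ⟨W, hW⟩ := (Submodule.span (ZMod 2) {Additive.ofMul v}).exists_isCompl
  refine ⟨AddSubgroup.toSubgroup' W.toAddSubgroup, fun hvW => hv' ?_, ?_⟩
  · exact (Submodule.disjoint_def.mp hW.disjoint) _ (Submodule.mem_span_singleton_self _) hvW
  · have hspan : Nat.card (Submodule.span (ZMod 2) {Additive.ofMul v}) = 2 := by
      rw [Module.natCard_eq_pow_finrank (K := ZMod 2), finrank_span_singleton hv',
        Nat.card_zmod, pow_one]
    have h := Nat.card_congr (Submodule.prodEquivOfIsCompl _ _ hW).toEquiv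
    rw [Nat.card_prod, hspan, Nat.card_congr Additive.toMul] at h
    rw [← h, mul_comm]
    rfl

lemma sq_eq_one_of_mulEquiv {ι : Type*} (e : E ≃* Multiplicative (ι → ZMod 2)) (x : E) :
    x ^ 2 = 1 := by
  refine e.injective (Multiplicative.toAdd.injective ?_)
  rw [map_pow, map_one, toAdd_pow, toAdd_one, two_nsmul]
  exact funext fun i => CharTwo.add_self_eq_zero _

end ElementaryAbelian

lemma Nat.card_subtype_eq_card_and_add_card_and_not {α : Type*} [Finite α] (p q : α → Prop) :
    Nat.card {x // p x} = Nat.card {x // p x ∧ q x} + Nat.card {x // p x ∧ ¬q x} := by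
  classical
  rw [← Nat.card_sum]
  exact Nat.card_congr ((Equiv.sumCompl fun x : {x // p x} => q x).symm.trans
    (Equiv.sumCongr (Equiv.subtypeSubtypeEquivSubtypeInter p q)
      (Equiv.subtypeSubtypeEquivSubtypeInter p (¬q ·))))

section CyclicSubgroups

variable {G : Type*} [Group G]

lemma eq_one_or_eq_of_mem_zpowers_of_sq_eq_one {x y : G} (hx : x ^ 2 = 1)
    (hy : y ∈ zpowers x) : y = 1 ∨ y = x := by
  obtain ⟨k, rfl⟩ := mem_zpowers_iff.mp hy
  rw [zpow_eq_zpow_emod' k hx]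
  rcases Int.emod_two_eq_zero_or_one k with h | h <;> simp [h]

lemma mem_zpowers_of_pow_four_eq_one {x y : G} (hx : x ^ 4 = 1) (hy : y ∈ zpowers x) :
    y = 1 ∨ y = x ∨ y = x ^ 2 ∨ y = x⁻¹ := by
  obtain ⟨k, rfl⟩ := mem_zpowers_iff.mp hy
  have hx3 : x ^ 3 = x⁻¹ := eq_inv_of_mul_eq_one_left (by rw [← pow_succ, hx])
  rw [zpow_eq_zpow_emod' k hx]
  have : k % 4 = 0 ∨ k % 4 = 1 ∨ k % 4 = 2 ∨ k % 4 = 3 := by omega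
  rcases this with h | h | h | h <;> simp [h, ← hx3]

/-- `a ↦ zpowers a` maps `A` onto the cyclic subgroups inside `A`; as `zpowers a⁻¹ = zpowers a`,
it can only be injective if `a⁻¹ = a` throughout, and then `zpowers a = {1, a}` makes it so. -/
lemma card_cyclic_le_eq_card_iff [Finite G] (A : Subgroup G) :
    Nat.card {H : Subgroup G // IsCyclic H ∧ H ≤ A} = Nat.card A ↔ ∀ a ∈ A, a ^ 2 = 1 := by
  let f : A → {H : Subgroup G // IsCyclic H ∧ H ≤ A} :=
    fun a => ⟨zpowers a, inferInstance, zpowers_le.mpr a.2⟩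
  have hf : Function.Surjective f := by
    rintro ⟨H, hcyc, hle⟩
    obtain ⟨g, rfl⟩ := H.isCyclic_iff_exists_zpowers_eq_top.mp hcyc
    exact ⟨⟨g, hle (mem_zpowers g)⟩, rfl⟩
  have hfeq {a b : A} : f a = f b ↔ zpowers (a : G) = zpowers (b : G) := Subtype.ext_iff
  rw [eq_comm, ← (Nat.bijective_iff_surjective_and_card f).trans (and_iff_right hf)]
  constructor
  · intro hbij a ha
    have : (⟨a, ha⟩ : A)⁻¹ = ⟨a, ha⟩ := hbij.1 (hfeq.mpr zpowers_inv)
    rw [pow_two, ← inv_eq_iff_mul_eq_one]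
    exact congrArg Subtype.val this
  · intro hA
    refine ⟨fun a b hab => ?_, hf⟩
    have hab := hfeq.mp hab
    rcases eq_one_or_eq_of_mem_zpowers_of_sq_eq_one (hA a a.2) (hab ▸ mem_zpowers (b : G)) with
      hb | hb
    · have ha : (a : G) ∈ zpowers (b : G) := hab ▸ mem_zpowers _
      rw [hb, zpowers_one_eq_bot, mem_bot] at ha
      exact Subtype.ext (ha.trans hb.symm)
    · exact Subtype.ext hb.symm

end CyclicSubgroups

section Dicyclic

variable {G : Type*} [Group G] {A : Subgroup G} {γ : G}

lemma mul_sq_of_conj_eq_inv (hconj : ∀ g ∈ A, γ * g * γ⁻¹ = g⁻¹) {a : G} (ha : a ∈ A) :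
    (γ * a) ^ 2 = γ ^ 2 := by
  have h : a * γ = γ * a⁻¹ := by
    have h' := hconj a⁻¹ (inv_mem ha)
    rw [inv_inv] at h'
    calc a * γ = γ * a⁻¹ * γ⁻¹ * γ := by rw [h']
      _ = γ * a⁻¹ := by group
  calc (γ * a) ^ 2 = γ * (a * γ) * a := by simp only [pow_two, mul_assoc]
    _ = γ ^ 2 := by rw [h, pow_two]; group

lemma inv_mul_mem_of_index_two (hidx : A.index = 2) (hγA : γ ∉ A) {g : G} (hg : g ∉ A) :
    γ⁻¹ * g ∈ A :=
  (mul_mem_iff_of_index_two hidx).mpr (iff_of_false (inv_mem_iff.not.mpr hγA) hg)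

variable (hconj : ∀ g ∈ A, γ * g * γ⁻¹ = g⁻¹) (hγA : γ ∉ A)
include hconj hγA

lemma commute_of_sq_eq_one (hidx : A.index = 2) (hsq : ∀ a ∈ A, a ^ 2 = 1) (g h : G) :
    Commute g h := by
  have hinv {a : G} (ha : a ∈ A) : a⁻¹ = a :=
    inv_eq_of_mul_eq_one_left (by rw [← pow_two, hsq a ha])
  have hAA {a b : G} (ha : a ∈ A) (hb : b ∈ A) : Commute a b := by
    rw [commute_iff_eq, ← hinv (mul_mem ha hb), mul_inv_rev, hinv ha, hinv hb]
  have hγ {a : G} (ha : a ∈ A) : Commute γ a :=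
    mul_inv_eq_iff_eq_mul.mp ((hconj a ha).trans (hinv ha))
  have hdec (g : G) : ∃ a ∈ A, g = a ∨ g = γ * a := by
    by_cases hg : g ∈ A
    · exact ⟨g, hg, Or.inl rfl⟩
    · exact ⟨γ⁻¹ * g, inv_mul_mem_of_index_two hidx hγA hg, Or.inr (mul_inv_cancel_left γ g).symm⟩
  have hγG (y : G) : Commute γ y := by
    obtain ⟨b, hb, rfl | rfl⟩ := hdec y
    exacts [hγ hb, (Commute.refl γ).mul_right (hγ hb)]
  have hAG {a : G} (ha : a ∈ A) (y : G) : Commute a y := by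
    obtain ⟨b, hb, rfl | rfl⟩ := hdec y
    exacts [hAA ha hb, (hγ ha).symm.mul_right (hAA ha hb)]
  obtain ⟨a, ha, rfl | rfl⟩ := hdec g
  exacts [hAG ha h, (hγG h).mul_left (hAG ha h)]

variable (hγ2 : γ ^ 2 ∈ A) (hγ4 : γ ^ 4 = 1)
include hγ2 hγ4

lemma zpowers_mul_eq_zpowers_mul_iff {a b : G} (ha : a ∈ A) (hb : b ∈ A) :
    zpowers (γ * a) = zpowers (γ * b) ↔ b = a ∨ b = a * γ ^ 2 := by
  have hsq := mul_sq_of_conj_eq_inv hconj ha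
  have hpow : (γ * a) ^ 4 = 1 := by rw [show 4 = 2 * 2 by norm_num, pow_mul, hsq, ← pow_mul, hγ4]
  have hinv : (γ * a)⁻¹ = γ * (a * γ ^ 2) := by
    rw [← mul_assoc, ← hsq, ← pow_succ']
    exact (eq_inv_of_mul_eq_one_left (by rw [← pow_succ, hpow])).symm
  have hγb : γ * b ∉ A := (mul_mem_cancel_right hb).not.mpr hγA
  constructor
  · intro h
    rcases mem_zpowers_of_pow_four_eq_one hpow (h ▸ mem_zpowers (γ * b)) with h1 | h1 | h1 | h1
    · exact absurd (h1 ▸ one_mem A) hγb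
    · exact Or.inl (mul_left_cancel h1.symm).symm
    · exact absurd (h1 ▸ hsq ▸ hγ2) hγb
    · exact Or.inr (mul_left_cancel (h1.trans hinv))
  · rintro (rfl | rfl)
    · rfl
    · rw [← hinv, zpowers_inv]

/-- The cyclic subgroups outside `A` are the `zpowers (γ * a)`, and two of them coincide exactly
when the `a`'s lie in the same coset of `{1, γ ^ 2}`. -/
lemma card_cyclic_not_le_mul_two (hidx : A.index = 2) (hγ2ne : γ ^ 2 ≠ 1) :
    Nat.card {H : Subgroup G // IsCyclic H ∧ ¬H ≤ A} * 2 = Nat.card A := by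
  let c : A := ⟨γ ^ 2, hγ2⟩
  have hc : c ^ 2 = 1 := Subtype.ext (by simp [c, ← pow_mul, hγ4])
  have hc1 : c ≠ 1 := fun h => hγ2ne (congrArg Subtype.val h)
  let f : A → {H : Subgroup G // IsCyclic H ∧ ¬H ≤ A} := fun a =>
    ⟨zpowers (γ * a), inferInstance,
      fun hle => hγA ((mul_mem_cancel_right a.2).mp (hle (mem_zpowers _)))⟩
  have hf : Function.Surjective f := by
    rintro ⟨H, hcyc, hle⟩
    obtain ⟨g, rfl⟩ := H.isCyclic_iff_exists_zpowers_eq_top.mp hcyc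
    have hg : g ∉ A := fun hg => hle (zpowers_le.mpr hg)
    exact ⟨⟨γ⁻¹ * g, inv_mul_mem_of_index_two hidx hγA hg⟩, Subtype.ext (by simp [f])⟩
  have hker (a b : A) : f a = f b ↔ a⁻¹ * b ∈ zpowers c := by
    rw [Subtype.ext_iff, zpowers_mul_eq_zpowers_mul_iff hconj hγA hγ2 hγ4 a.2 b.2]
    constructor
    · rintro (h | h)
      · rw [Subtype.ext h, inv_mul_cancel]
        exact one_mem _
      · rw [show b = a * c from Subtype.ext h, inv_mul_cancel_left]
        exact mem_zpowers c
    · intro h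
      rcases eq_one_or_eq_of_mem_zpowers_of_sq_eq_one hc h with h | h
      · rw [inv_mul_eq_one] at h
        exact Or.inl (congrArg Subtype.val h.symm)
      · rw [inv_mul_eq_iff_eq_mul] at h
        exact Or.inr (congrArg Subtype.val h)
  have hquot : Nat.card {H : Subgroup G // IsCyclic H ∧ ¬H ≤ A} = Nat.card (A ⧸ zpowers c) :=
    Nat.card_congr ((Setoid.quotientKerEquivOfSurjective f hf).symm.trans
      (Quotient.congrRight fun a b => (hker a b).trans QuotientGroup.leftRel_apply.symm))
  rw [hquot, card_eq_card_quotient_mul_card_subgroup (zpowers c), Nat.card_zpowers,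
    orderOf_eq_prime hc hc1]

lemma alpha_eq_three_div_four_iff [Finite G] (hidx : A.index = 2) (hγ2ne : γ ^ 2 ≠ 1) :
    alpha G = 3 / 4 ↔ ∀ a ∈ A, a ^ 2 = 1 := by
  have hout := card_cyclic_not_le_mul_two hconj hγA hγ2 hγ4 hidx hγ2ne
  have hpos : 0 < Nat.card {H : Subgroup G // IsCyclic H ∧ ¬H ≤ A} := by
    have : 0 < Nat.card A := Nat.card_pos
    omega
  rw [← card_cyclic_le_eq_card_iff A, alpha,
    Nat.card_subtype_eq_card_and_add_card_and_not _ (· ≤ A), ← card_mul_index A,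
    hidx, ← hout, div_eq_div_iff (by norm_cast; omega) (by norm_num)]
  norm_cast
  omega

/-- `γ` centralizes `A`, so `G` is abelian, and a complement of `γ ^ 2` in the `ZMod 2`-vector
space `A` is a complement of `zpowers γ` in `G`. -/
lemma nonempty_mulEquiv_prod_zmod_four [Finite G] (hidx : A.index = 2) (hγ2ne : γ ^ 2 ≠ 1)
    (hsq : ∀ a ∈ A, a ^ 2 = 1) {m : ℕ} (hAcard : Nat.card A = 2 ^ (m + 1)) :
    Nonempty (G ≃* Multiplicative ((Fin m → ZMod 2) × ZMod 4)) := by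
  let _ : CommGroup G :=
    { mul_comm := fun g h => (commute_of_sq_eq_one hconj hγA hidx hsq g h).eq }
  have hsqA (x : A) : x ^ 2 = 1 := Subtype.ext (hsq x x.2)
  obtain ⟨W₀, hγ2W₀, hW₀⟩ := exists_subgroup_notMem_card_mul_two hsqA
    (v := ⟨γ ^ 2, hγ2⟩) fun h => hγ2ne (congrArg Subtype.val h)
  set W := W₀.map A.subtype
  have hWA : W ≤ A := map_subtype_le W₀
  have hWcard : Nat.card W = 2 ^ m := by
    rw [card_map_of_injective A.subtype_injective]
    rw [hAcard, pow_succ] at hW₀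
    exact Nat.eq_of_mul_eq_mul_right two_pos hW₀
  have hKcard : Nat.card (zpowers γ) = 4 := by
    rw [Nat.card_zpowers]
    exact orderOf_eq_prime_pow (p := 2) (n := 1) (by simpa using hγ2ne) (by simpa using hγ4)
  have hdisj : Disjoint W (zpowers γ) := by
    rw [disjoint_def]
    intro x hxW hxK
    rcases mem_zpowers_of_pow_four_eq_one hγ4 hxK with rfl | rfl | rfl | rfl
    · rfl
    · exact absurd (hWA hxW) hγA
    · exact absurd ((mem_map_iff_mem A.subtype_injective (x := ⟨γ ^ 2, hγ2⟩)).mp hxW) hγ2W₀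
    · exact absurd (inv_mem_iff.mp (hWA hxW)) hγA
  have hcompl : W.IsComplement' (zpowers γ) := by
    refine isComplement'_of_card_mul_and_disjoint ?_ hdisj
    rw [hWcard, hKcard, ← card_mul_index A, hidx, hAcard]
    ring
  obtain ⟨eW⟩ := nonempty_mulEquiv_of_sq_eq_one (fun x : W => Subtype.ext (hsq _ (hWA x.2)))
    hWcard
  let eK : zpowers γ ≃* Multiplicative (ZMod 4) := mulEquivOfCyclicCardEq (by simpa using hKcard)
  exact ⟨(MulEquiv.ofBijective (W.subtype.coprod (zpowers γ).subtype) hcompl).symm.trans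
    ((eW.prodCongr eK).trans (MulEquiv.prodMultiplicative _ _).symm)⟩

end Dicyclic

theorem stmt_14_general (n : ℕ) (hn : 2 ≤ n) (G : Type*) [Group G] [Finite G]
    (A : Subgroup G) (hAcard : Nat.card A = 2 ^ (n - 1))
    (hGcard : Nat.card G = 2 ^ n) (γ : G) (hγA : γ ∉ A)
    (hγ4 : γ ^ 4 = 1) (hγ2 : γ ^ 2 ∈ A) (hγ2ne : γ ^ 2 ≠ 1)
    (hconj : ∀ g ∈ A, γ * g * γ⁻¹ = g⁻¹) :
    (alpha G = 3 / 4 ↔ Nonempty (A ≃* Multiplicative (Fin (n - 1) → ZMod 2))) ∧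
    (alpha G = 3 / 4 →
      Nonempty (G ≃* Multiplicative ((Fin (n - 2) → ZMod 2) × ZMod 4))) := by
  obtain ⟨m, rfl⟩ : ∃ m, n = m + 2 := ⟨n - 2, by omega⟩
  rw [show m + 2 - 1 = m + 1 by omega] at hAcard ⊢
  rw [Nat.add_sub_cancel]
  have hidx : A.index = 2 := by
    rw [← card_mul_index A, hAcard, pow_succ 2 (m + 1)] at hGcard
    exact Nat.eq_of_mul_eq_mul_left (by positivity) hGcard
  have hα := alpha_eq_three_div_four_iff hconj hγA hγ2 hγ4 hidx hγ2ne
  have hsqA : (∀ a ∈ A, a ^ 2 = 1) ↔ ∀ x : A, x ^ 2 = 1 :=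
    ⟨fun h x => Subtype.ext (h x x.2), fun h a ha => congrArg Subtype.val (h ⟨a, ha⟩)⟩
  refine ⟨hα.trans (hsqA.trans ⟨fun h => nonempty_mulEquiv_of_sq_eq_one h hAcard,
    fun ⟨e⟩ => sq_eq_one_of_mulEquiv e⟩), fun h => ?_⟩
  exact nonempty_mulEquiv_prod_zmod_four hconj hγA hγ2 hγ4 hidx hγ2ne (hα.mp h) hAcard

/-- `G` is a generalized dicyclic group `Dic_{2^n}(A)`: `A` is an abelian subgroup of
order `2^{n-1}`, `γ ∉ A`, `γ⁴ = 1`, `γ² ∈ A \ {1}`, and `γ` inverts `A` by conjugation. -/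
theorem stmt_14 (n : ℕ) (hn : 2 ≤ n) (G : Type*) [Group G] [Finite G]
    (A : Subgroup G) (hA : IsMulCommutative A) (hAcard : Nat.card A = 2 ^ (n - 1))
    (hGcard : Nat.card G = 2 ^ n) (γ : G) (hγA : γ ∉ A)
    (hγ4 : γ ^ 4 = 1) (hγ2 : γ ^ 2 ∈ A) (hγ2ne : γ ^ 2 ≠ 1)
    (hconj : ∀ g ∈ A, γ * g * γ⁻¹ = g⁻¹) :
    (alpha G = 3 / 4 ↔ Nonempty (A ≃* Multiplicative (Fin (n - 1) → ZMod 2))) ∧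
    (alpha G = 3 / 4 →
      Nonempty (G ≃* Multiplicative ((Fin (n - 2) → ZMod 2) × ZMod 4))) :=
  stmt_14_general n hn G A hAcard hGcard γ hγA hγ4 hγ2 hγ2ne hconj
end

section
/- For an abelian group A of order 2^{n-1}, the number of cyclic subgroups of the generalized dicyclic group Dic_{2^n}(A) equals |L1(A)| + 2^{n-2}. -/
/-!
Every `x ∉ A` is `γ a` with `a ∈ A`, and as `γ` inverts `A`, `x² = γ²`; so `x` has order 4 and
`⟨x⟩ = {1, x, γ², x⁻¹}` meets `G \ A` exactly in `{x, x⁻¹}`. Hence the cyclic subgroups not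
contained in `A` are counted two-to-one by the `2^{n-1}` elements of `G \ A`, while those
contained in `A` are the cyclic subgroups of `A`.
-/

open Subgroup

theorem Nat.card_eq_mul_of_forall_card_fiber_eq {α β : Type*} [Finite α] [Finite β] (f : α → β)
    {k : ℕ} (hf : ∀ b, Nat.card {a // f a = b} = k) : Nat.card α = k * Nat.card β := by
  have := Fintype.ofFinite β
  rw [← Nat.card_congr (Equiv.sigmaFiberEquiv f), Nat.card_sigma]
  simp [hf, Nat.card_eq_fintype_card, mul_comm]

theorem Nat.card_subtype_add_card_subtype_not {α : Type*} [Finite α] (p : α → Prop) :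
    Nat.card {a // p a} + Nat.card {a // ¬p a} = Nat.card α := by
  classical
  rw [← Nat.card_sum, Nat.card_congr (Equiv.sumCompl p)]

section

variable {G : Type*} [Group G]

theorem Subgroup.card_isCyclic_le (A : Subgroup G) :
    Nat.card {H : {H : Subgroup G // IsCyclic H} // H.1 ≤ A} =
      Nat.card {H : Subgroup A // IsCyclic H} := by
  have hcyc (H : Subgroup A) : IsCyclic H ↔ IsCyclic (H.map A.subtype) :=
    (H.equivMapOfInjective A.subtype A.subtype_injective).isCyclic
  refine Nat.card_congr ((MapSubtype.orderIso A).toEquiv.subtypeEquiv hcyc |>.trans <|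
    (Equiv.subtypeSubtypeEquivSubtypeInter (· ≤ A) fun H : Subgroup G => IsCyclic H).trans <|
    (Equiv.subtypeEquivRight fun _ => and_comm).trans <|
    (Equiv.subtypeSubtypeEquivSubtypeInter (fun H : Subgroup G => IsCyclic H) (· ≤ A)).symm).symm

theorem sq_eq_sq_of_inv_mul_mem {A : Subgroup G} {γ x : G} (hconj : ∀ g ∈ A, γ * g * γ⁻¹ = g⁻¹)
    (hx : γ⁻¹ * x ∈ A) : x ^ 2 = γ ^ 2 := by
  set a := γ⁻¹ * x
  have hxa : x = γ * a := (mul_inv_cancel_left γ x).symm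
  have h1 : γ * a = a⁻¹ * γ := mul_inv_eq_iff_eq_mul.1 (hconj a hx)
  have h2 : γ * a⁻¹ = a * γ := by simpa using mul_inv_eq_iff_eq_mul.1 (hconj a⁻¹ (inv_mem hx))
  calc x ^ 2 = a⁻¹ * γ * (a⁻¹ * γ) := by rw [sq, hxa, h1]
    _ = a⁻¹ * (γ * a⁻¹) * γ := by group
    _ = γ ^ 2 := by rw [h2, inv_mul_cancel_left, sq]

section OrderFour

variable {A : Subgroup G} {x y : G}

theorem eq_or_eq_inv_of_mem_zpowers_of_notMem (hsq : x ^ 2 ∈ A) (h4 : orderOf x = 4)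
    (hy : y ∈ zpowers x) (hyA : y ∉ A) : y = x ∨ y = x⁻¹ := by
  classical
  have hfin : IsOfFinOrder x := orderOf_pos_iff.1 (by omega)
  obtain ⟨k, hk, rfl⟩ := Finset.mem_image.1 (hfin.mem_zpowers_iff_mem_range_orderOf.1 hy)
  rw [h4, Finset.mem_range] at hk
  interval_cases k
  · simp at hyA
  · exact Or.inl (pow_one x)
  · exact absurd hsq hyA
  · refine Or.inr (eq_inv_of_mul_eq_one_left ?_)
    rw [← pow_succ, ← pow_orderOf_eq_one x, h4]

theorem zpowers_eq_zpowers_iff_of_notMem (hsq : ∀ x ∉ A, x ^ 2 ∈ A)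
    (h4 : ∀ x ∉ A, orderOf x = 4) (hx : x ∉ A) (hy : y ∉ A) :
    zpowers y = zpowers x ↔ y = x ∨ y = x⁻¹ := by
  refine ⟨fun h => ?_, ?_⟩
  · exact eq_or_eq_inv_of_mem_zpowers_of_notMem (hsq x hx) (h4 x hx) (h ▸ mem_zpowers y) hy
  · rintro (rfl | rfl)
    exacts [rfl, zpowers_inv]

theorem card_notMem_eq_two_mul_card_isCyclic_not_le [Finite G] (hsq : ∀ x ∉ A, x ^ 2 ∈ A)
    (h4 : ∀ x ∉ A, orderOf x = 4) :
    Nat.card {x // x ∉ A} = 2 * Nat.card {H : {H : Subgroup G // IsCyclic H} // ¬H.1 ≤ A} := by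
  let f (x : {x // x ∉ A}) : {H : {H : Subgroup G // IsCyclic H} // ¬H.1 ≤ A} :=
    ⟨⟨zpowers x.1, inferInstance⟩, fun hle => x.2 (hle (mem_zpowers x.1))⟩
  have hf : Function.Surjective f := by
    rintro ⟨⟨H, hH⟩, hHA⟩
    obtain ⟨g, rfl⟩ := H.isCyclic_iff_exists_zpowers_eq_top.1 hH
    exact ⟨⟨g, fun hg => hHA (zpowers_le.2 hg)⟩, rfl⟩
  refine Nat.card_eq_mul_of_forall_card_fiber_eq f fun H => ?_
  obtain ⟨⟨x, hx⟩, rfl⟩ := hf H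
  have hfiber (y : {x // x ∉ A}) : f y = f ⟨x, hx⟩ ↔ y.1 = x ∨ y.1 = x⁻¹ := by
    simp only [f, Subtype.ext_iff]
    exact zpowers_eq_zpowers_iff_of_notMem hsq h4 hx y.2
  have hx_ne : x ≠ x⁻¹ := fun h => by
    have := orderOf_dvd_of_pow_eq_one (sq x ▸ mul_eq_one_iff_eq_inv.2 h)
    rw [h4 x hx] at this
    norm_num at this
  rw [Nat.card_eq_two_iff]
  refine ⟨⟨⟨x, hx⟩, rfl⟩, ⟨⟨x⁻¹, inv_mem_iff.not.2 hx⟩, (hfiber _).2 (Or.inr rfl)⟩, ?_, ?_⟩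
  · simpa [Subtype.ext_iff] using hx_ne
  · ext ⟨y, hy⟩
    simpa [Subtype.ext_iff] using (hfiber y).1 hy

end OrderFour

end

theorem stmt_15_general (n : ℕ) (hn : 2 ≤ n) (G : Type*) [Group G] [Finite G]
    (A : Subgroup G) (hAcard : Nat.card A = 2 ^ (n - 1))
    (hGcard : Nat.card G = 2 ^ n) (γ : G) (hγA : γ ∉ A)
    (hγ4 : γ ^ 4 = 1) (hγ2ne : γ ^ 2 ≠ 1)
    (hconj : ∀ g ∈ A, γ * g * γ⁻¹ = g⁻¹) :
    Nat.card {H : Subgroup G // IsCyclic H} =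
      Nat.card {H : Subgroup A // IsCyclic H} + 2 ^ (n - 2) := by
  obtain ⟨m, rfl⟩ := Nat.exists_eq_add_of_le' hn
  simp only [Nat.add_sub_cancel, Nat.add_succ_sub_one] at hAcard hGcard ⊢
  have hindex : A.index = 2 := by
    have := A.index_mul_card
    rw [hAcard, hGcard, pow_succ _ (m + 1)] at this
    exact Nat.eq_of_mul_eq_mul_right (by positivity) (this.trans (mul_comm _ _))
  have hsq (x : G) (hx : x ∉ A) : x ^ 2 = γ ^ 2 :=
    sq_eq_sq_of_inv_mul_mem hconj
      ((mul_mem_iff_of_index_two hindex).2 (iff_of_false (inv_mem_iff.not.2 hγA) hx))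
  have h4 (x : G) (hx : x ∉ A) : orderOf x = 4 :=
    orderOf_eq_prime_pow (p := 2) (n := 1) (by simpa [hsq x hx])
      (by rw [show 2 ^ (1 + 1) = 2 * 2 by rfl, pow_mul, hsq x hx, ← pow_mul, hγ4])
  have hcompl : Nat.card A + Nat.card {x // x ∉ A} = Nat.card G :=
    Nat.card_subtype_add_card_subtype_not (· ∈ A)
  have hcyc := Nat.card_subtype_add_card_subtype_not
    fun H : {H : Subgroup G // IsCyclic H} => H.1 ≤ A
  rw [A.card_isCyclic_le] at hcyc
  rw [card_notMem_eq_two_mul_card_isCyclic_not_le (fun x _ => sq_mem_of_index_two hindex x) h4,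
    hAcard, hGcard, pow_succ _ (m + 1), pow_succ] at hcompl
  omega

/-- `G` is a generalized dicyclic group `Dic_{2^n}(A)`: `A` is an abelian subgroup of
order `2^{n-1}`, `γ ∉ A`, `γ⁴ = 1`, `γ² ∈ A \ {1}`, and `γ` inverts `A` by conjugation. -/
theorem stmt_15 (n : ℕ) (hn : 2 ≤ n) (G : Type*) [Group G] [Finite G]
    (A : Subgroup G) (hA : IsMulCommutative A) (hAcard : Nat.card A = 2 ^ (n - 1))
    (hGcard : Nat.card G = 2 ^ n) (γ : G) (hγA : γ ∉ A)
    (hγ4 : γ ^ 4 = 1) (hγ2 : γ ^ 2 ∈ A) (hγ2ne : γ ^ 2 ≠ 1)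
    (hconj : ∀ g ∈ A, γ * g * γ⁻¹ = g⁻¹) :
    Nat.card {H : Subgroup G // IsCyclic H} =
      Nat.card {H : Subgroup A // IsCyclic H} + 2 ^ (n - 2) :=
  stmt_15_general n hn G A hAcard hGcard γ hγA hγ4 hγ2ne hconj
end

section
/- Among all finite non-abelian 2-groups possessing a cyclic maximal subgroup (i.e., groups isomorphic to M(2^n) for n ≥ 4, D_{2^n} for n ≥ 3, Q_{2^n} for n ≥ 3, or S_{2^n} for n ≥ 4), the dihedral group D_16 of order 16 is the only one with α(G) = 3/4. -/
/-!
Let `A = ⟨a⟩` be the cyclic subgroup of index 2, of order `2 ^ m` with `m = n - 1`. A cyclic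
subgroup either lies in `A`, and there are `m + 1` of those, or it is `⟨g⟩` for some `g ∉ A`.
Since `⟨g⟩ = ⟨g⁻¹⟩`, the `2 ^ m` elements outside `A` give at most `2 ^ m` such subgroups: exactly
`2 ^ m` if all of them are involutions, fewer otherwise, and at most `2 ^ (m - 1)` if none is.

`α(G) = 3/4` says `|L₁(G)| = 3 · 2 ^ (m - 1)`. If every element outside `A` is an involution,
`|L₁(G)| = m + 1 + 2 ^ m` forces `m = 3`, and such a group is dihedral. Otherwise
`|L₁(G)| ≤ m + 2 ^ m` forces `m = 2`. Conjugation by an involution `t ∉ A` would then send `a` to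
`a` or `a⁻¹`; the first makes `G` abelian, the second gives every element outside `A` the square
`t ^ 2 = 1`. So no element outside `A` is an involution and `|L₁(G)| ≤ 3 + 2 < 6`.
-/

open Subgroup

section CyclicSubgroups

variable {G : Type*} [Group G]

theorem card_cyclicSubgroups_eq_ncard_range_zpowers :
    Nat.card {K : Subgroup G // IsCyclic K} = (Set.range (zpowers : G → Subgroup G)).ncard := by
  rw [← Nat.card_coe_set_eq]
  congr
  ext K
  exact K.isCyclic_iff_exists_zpowers_eq_top

theorem alpha_congr {H : Type*} [Group H] (e : G ≃* H) : alpha G = alpha H := by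
  have hrange : Set.range (zpowers : H → Subgroup H) =
      Subgroup.map e.toMonoidHom '' Set.range zpowers := by
    rw [← Set.range_comp, ← e.surjective.range_comp]
    congr 1
    ext g
    simp [MonoidHom.map_zpowers]
  unfold alpha
  rw [Nat.card_congr e.toEquiv, card_cyclicSubgroups_eq_ncard_range_zpowers,
    card_cyclicSubgroups_eq_ncard_range_zpowers, hrange,
    Set.ncard_image_of_injective _ (Subgroup.map_injective e.injective)]

theorem zpowers_injOn_sq_eq_one : Set.InjOn (zpowers : G → Subgroup G) {g | g ^ 2 = 1} := by
  intro g hg h hh hgh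
  have mem_pair : ∀ {x y : G}, y ^ 2 = 1 → x ∈ zpowers y → x = 1 ∨ x = y := by
    intro x y hy hx
    obtain ⟨k, rfl⟩ := mem_zpowers_iff.mp hx
    rw [← Int.emod_add_mul_ediv k 2, zpow_add, zpow_mul, zpow_two, ← pow_two, hy, one_zpow,
      mul_one]
    rcases Int.emod_two_eq k with hk | hk <;> simp [hk]
  rcases mem_pair hh (hgh ▸ mem_zpowers g) with rfl | rfl
  · rcases mem_pair hg (hgh ▸ mem_zpowers h) with rfl | rfl <;> rfl
  · rfl

theorem ncard_image_zpowers_lt {S : Set G} (hS : S.Finite) {g : G} (hg : g ∈ S)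
    (hg' : g⁻¹ ∈ S) (hg2 : g ^ 2 ≠ 1) : (zpowers '' S).ncard < S.ncard := by
  have hne : g ≠ g⁻¹ := fun h => hg2 (pow_two g ▸ eq_inv_iff_mul_eq_one.mp h)
  have himage : zpowers '' S = zpowers '' (S \ {g⁻¹}) := by
    refine subset_antisymm ?_ (Set.image_mono Set.sdiff_subset)
    rintro _ ⟨x, hx, rfl⟩
    by_cases hx' : x = g⁻¹
    · exact ⟨g, ⟨hg, hne⟩, by rw [hx', zpowers_inv]⟩
    · exact ⟨x, ⟨hx, hx'⟩, rfl⟩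
  calc (zpowers '' S).ncard ≤ (S \ {g⁻¹}).ncard := himage ▸ Set.ncard_image_le hS.sdiff
    _ < S.ncard := Set.ncard_sdiff_singleton_lt_of_mem hg' hS

theorem two_mul_ncard_image_zpowers_le {S : Set G} (hS : S.Finite)
    (hinv : ∀ g ∈ S, g⁻¹ ∈ S) (hS2 : ∀ g ∈ S, g ^ 2 ≠ 1) :
    2 * (zpowers '' S).ncard ≤ S.ncard := by
  classical
  lift S to Finset G using hS
  rw [← Finset.coe_image, Set.ncard_coe_finset, Set.ncard_coe_finset]
  refine Finset.mul_card_image_le_card _ _ fun K hK => ?_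
  obtain ⟨g, hg, rfl⟩ := Finset.mem_image.mp hK
  have hne : g ≠ g⁻¹ := fun h => hS2 g hg (pow_two g ▸ eq_inv_iff_mul_eq_one.mp h)
  calc 2 = ({g, g⁻¹} : Finset G).card := (Finset.card_pair hne).symm
    _ ≤ _ := Finset.card_le_card fun x hx => by
      rcases Finset.mem_insert.mp hx with rfl | hx
      · exact Finset.mem_filter.mpr ⟨hg, rfl⟩
      · rw [Finset.mem_singleton.mp hx]
        exact Finset.mem_filter.mpr ⟨hinv g hg, zpowers_inv⟩

section Finite

variable [Finite G]

theorem eq_zpowers_pow_div_card_of_le_zpowers {a : G} {K : Subgroup G} (hK : K ≤ zpowers a) :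
    K = zpowers (a ^ (orderOf a / Nat.card K)) := by
  have hdvd : Nat.card K ∣ orderOf a := Nat.card_zpowers a ▸ card_dvd_of_le hK
  have hN : orderOf a ≠ 0 := (orderOf_pos a).ne'
  have hd : 0 < Nat.card K := Nat.card_pos
  refine eq_of_le_of_card_ge (fun x hx => ?_) ?_
  · obtain ⟨i, rfl⟩ := mem_powers_iff_mem_zpowers.mpr (hK hx)
    have hpow : (a ^ i) ^ Nat.card K = 1 :=
      orderOf_dvd_iff_pow_eq_one.mp (K.orderOf_dvd_natCard hx)
    have hdiv : orderOf a / Nat.card K ∣ i := by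
      have h := orderOf_dvd_of_pow_eq_one (by rwa [← pow_mul] at hpow)
      rw [← Nat.div_mul_cancel hdvd] at h
      exact Nat.dvd_of_mul_dvd_mul_right hd h
    obtain ⟨c, rfl⟩ := hdiv
    simpa only [pow_mul] using pow_mem (mem_zpowers _) c
  · rw [Nat.card_zpowers, orderOf_pow_orderOf_div hN hdvd]

theorem ncard_Iic_zpowers (a : G) :
    (Set.Iic (zpowers a)).ncard = (orderOf a).divisors.card := by
  have hN : orderOf a ≠ 0 := (orderOf_pos a).ne'
  have hIic : Set.Iic (zpowers a) =
      (fun d => zpowers (a ^ (orderOf a / d))) '' ((orderOf a).divisors : Set ℕ) := by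
    ext K
    refine ⟨fun hK => ⟨Nat.card K, ?_, (eq_zpowers_pow_div_card_of_le_zpowers hK).symm⟩, ?_⟩
    · exact Nat.mem_divisors.mpr ⟨Nat.card_zpowers a ▸ card_dvd_of_le hK, hN⟩
    · rintro ⟨d, -, rfl⟩
      exact zpowers_le.mpr (pow_mem (mem_zpowers a) _)
  rw [hIic, Set.InjOn.ncard_image, Set.ncard_coe_finset]
  intro d hd e he hde
  have hcard := congrArg (fun K : Subgroup G => Nat.card K) hde
  simp only [Nat.card_zpowers] at hcard
  rwa [orderOf_pow_orderOf_div hN (Nat.dvd_of_mem_divisors hd),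
    orderOf_pow_orderOf_div hN (Nat.dvd_of_mem_divisors he)] at hcard

theorem card_cyclicSubgroups_eq (a : G) :
    Nat.card {K : Subgroup G // IsCyclic K} =
      (orderOf a).divisors.card + (zpowers '' (zpowers a : Set G)ᶜ).ncard := by
  have hinside : zpowers '' (zpowers a : Set G) = Set.Iic (zpowers a) := by
    ext K
    refine ⟨fun ⟨g, hg, hK⟩ => hK ▸ zpowers_le.mpr hg, fun hK => ?_⟩
    have : IsCyclic K := isCyclic_of_le hK
    obtain ⟨g, rfl⟩ := K.isCyclic_iff_exists_zpowers_eq_top.mp this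
    exact ⟨g, zpowers_le.mp hK, rfl⟩
  have hdisj : Disjoint (zpowers '' (zpowers a : Set G)) (zpowers '' (zpowers a : Set G)ᶜ) := by
    rw [hinside, Set.disjoint_left]
    rintro _ hK ⟨g, hg, rfl⟩
    exact hg (zpowers_le.mp hK)
  rw [card_cyclicSubgroups_eq_ncard_range_zpowers, ← Set.image_univ,
    ← Set.union_compl_self (zpowers a : Set G), Set.image_union, Set.ncard_union_eq hdisj,
    hinside, ncard_Iic_zpowers]

end Finite

end CyclicSubgroups

section IndexTwo

variable {G : Type*} [Group G] {a t : G}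

theorem mul_mem_of_notMem_of_index_two {A : Subgroup G} (hA : A.index = 2) {x y : G}
    (hx : x ∉ A) (hy : y ∉ A) : x * y ∈ A :=
  (mul_mem_iff_of_index_two hA).mpr (iff_of_false hx hy)

theorem eq_or_eq_inv_of_orderOf_eq_four {x : G} (hx : x ∈ zpowers a) (ha : orderOf a = 4)
    (hxo : orderOf x = 4) : x = a ∨ x = a⁻¹ := by
  have hfin : IsOfFinOrder a := orderOf_pos_iff.mp (by omega)
  obtain ⟨k, rfl⟩ : ∃ k : ℕ, a ^ k = x := hfin.mem_powers_iff_mem_zpowers.mpr hx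
  rw [← pow_mod_orderOf, ha] at hxo ⊢
  have hk : k % 4 < 4 := Nat.mod_lt _ (by norm_num)
  interval_cases k % 4
  · simp at hxo
  · simp
  · rw [orderOf_pow_of_dvd (by norm_num) (by rw [ha]; norm_num), ha] at hxo
    norm_num at hxo
  · refine Or.inr (eq_inv_of_mul_eq_one_left ?_)
    rw [← pow_succ, show 3 + 1 = orderOf a by omega, pow_orderOf_eq_one]

theorem commute_of_index_two (hA : (zpowers a).index = 2) (ht : t ∉ zpowers a)
    (hat : Commute a t) (x y : G) : Commute x y := by
  have ha : a ∈ closure {a, t} := subset_closure (by simp)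
  have ht' : t ∈ closure {a, t} := subset_closure (by simp)
  have htop : closure {a, t} = ⊤ := by
    refine eq_top_iff.mpr fun g _ => ?_
    by_cases hg : g ∈ zpowers a
    · exact zpowers_le.mpr ha hg
    · have := mul_mem_of_notMem_of_index_two hA hg (inv_mem_iff.not.mpr ht)
      simpa using mul_mem (zpowers_le.mpr ha this) ht'
  have hcomm : closure {a, t} ≤ centralizer (closure {a, t}) := by
    rw [centralizer_closure, closure_le]
    rintro g (rfl | rfl) h (rfl | rfl)
    exacts [rfl, hat.eq.symm, hat.eq, rfl]
  exact (hcomm (htop ▸ mem_top x) y (htop ▸ mem_top y)).symm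

theorem sq_eq_sq_of_conj_eq_inv (hA : (zpowers a).index = 2) (ht : t ∉ zpowers a)
    (hinv : t * a * t⁻¹ = a⁻¹) {g : G} (hg : g ∉ zpowers a) : g ^ 2 = t ^ 2 := by
  obtain ⟨k, hk⟩ := mem_zpowers_iff.mp
    (mul_mem_of_notMem_of_index_two hA hg (inv_mem_iff.not.mpr ht))
  have hconj : t * a ^ k * t⁻¹ = (a ^ k)⁻¹ := by
    simpa [hinv] using map_zpow (MulAut.conj t) a k
  rw [mul_inv_eq_iff_eq_mul.mp hk.symm]
  calc (a ^ k * t) ^ 2 = a ^ k * (t * a ^ k * t⁻¹) * t ^ 2 := by simp only [pow_two]; group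
    _ = t ^ 2 := by rw [hconj, mul_inv_cancel, one_mul]

theorem forall_sq_ne_one_of_orderOf_eq_four (hA : (zpowers a).index = 2) (ha : orderOf a = 4)
    (hnab : ∃ x y : G, x * y ≠ y * x) {g : G} (hg : g ∉ zpowers a) (hg2 : g ^ 2 ≠ 1) :
    ∀ h ∉ zpowers a, h ^ 2 ≠ 1 := by
  intro h hh hh2
  have hmem : h * a * h⁻¹ ∈ zpowers a := (normal_of_index_eq_two hA).conj_mem a (mem_zpowers a) h
  have hord : orderOf (h * a * h⁻¹) = 4 := (SemiconjBy.conj_mk h a).orderOf_eq ▸ ha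
  rcases eq_or_eq_inv_of_orderOf_eq_four hmem ha hord with hc | hc
  · obtain ⟨x, y, hxy⟩ := hnab
    exact hxy (commute_of_index_two hA hh (mul_inv_eq_iff_eq_mul.mp hc).symm x y).eq
  · exact hg2 (by rw [sq_eq_sq_of_conj_eq_inv hA hh hc hg, hh2])

section Finite

variable [Finite G]

theorem nonempty_mulEquiv_dihedralGroup (hA : (zpowers a).index = 2)
    (hinv : ∀ g ∉ zpowers a, g ^ 2 = 1) : Nonempty (G ≃* DihedralGroup (orderOf a)) := by
  obtain ⟨t, ht⟩ := SetLike.exists_not_mem_of_ne_top (zpowers a) fun h => by simp [h] at hA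
  have : NeZero (orderOf a) := ⟨(orderOf_pos a).ne'⟩
  have htt : t * t = 1 := by rw [← pow_two]; exact hinv t ht
  have hswap : ∀ x ∈ zpowers a, x * t = t * x⁻¹ := by
    intro x hx
    have hxt : x * t ∉ zpowers a := fun h => ht (by simpa using mul_mem (inv_mem hx) h)
    calc x * t = (x * t)⁻¹ := eq_inv_of_mul_eq_one_left (by rw [← pow_two]; exact hinv _ hxt)
      _ = t * x⁻¹ := by rw [mul_inv_rev, inv_eq_of_mul_eq_one_left htt]
  let f : ZMod (orderOf a) → G := fun i => a ^ i.val
  have hf_mem : ∀ i, f i ∈ zpowers a := fun i => pow_mem (mem_zpowers a) _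
  have hf_add : ∀ i j, f (i + j) = f i * f j := fun i j => by
    simp only [f]
    rw [ZMod.val_add, pow_mod_orderOf, pow_add]
  have hf_sub : ∀ i j, f (j - i) = (f i)⁻¹ * f j := fun i j =>
    eq_inv_mul_of_mul_eq (by rw [← hf_add, add_sub_cancel])
  -- `DihedralGroup.sr i` stands for `s * r ^ i`.
  let φ : DihedralGroup (orderOf a) → G
    | .r i => f i
    | .sr i => t * f i
  have hφ : ∀ x y, φ (x * y) = φ x * φ y := by
    rintro (i | i) (j | j)
    · exact hf_add i j
    · show t * f (j - i) = f i * (t * f j)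
      rw [hf_sub, ← mul_assoc (f i), hswap _ (hf_mem i), mul_assoc]
    · show t * f (i + j) = t * f i * f j
      rw [hf_add, mul_assoc]
    · show f (j - i) = t * f i * (t * f j)
      rw [hf_sub, mul_assoc t, ← mul_assoc (f i), hswap _ (hf_mem i), ← mul_assoc, ← mul_assoc,
        htt, one_mul]
  let F : DihedralGroup (orderOf a) →* G := MonoidHom.mk' φ hφ
  have hf_surj : ∀ x ∈ zpowers a, ∃ i, f i = x := fun x hx => by
    obtain ⟨k, rfl⟩ := mem_powers_iff_mem_zpowers.mpr hx
    exact ⟨k, by simp only [f, ZMod.val_natCast, pow_mod_orderOf]⟩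
  have hF : Function.Surjective F := by
    intro g
    by_cases hg : g ∈ zpowers a
    · obtain ⟨i, hi⟩ := hf_surj g hg
      exact ⟨.r i, hi⟩
    · obtain ⟨i, hi⟩ :=
        hf_surj (t⁻¹ * g) (mul_mem_of_notMem_of_index_two hA (inv_mem_iff.not.mpr ht) hg)
      exact ⟨.sr i, show t * f i = g by rw [hi, mul_inv_cancel_left]⟩
  have hcard : Nat.card (DihedralGroup (orderOf a)) ≤ Nat.card G := by
    rw [DihedralGroup.nat_card, ← card_mul_index (zpowers a), hA, Nat.card_zpowers, mul_comm]
  exact ⟨(MulEquiv.ofBijective F (hF.bijective_of_nat_card_le hcard)).symm⟩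

theorem ncard_compl_of_index_two {A : Subgroup G} (hA : A.index = 2) :
    ((A : Set G)ᶜ).ncard = Nat.card A := by
  rw [Set.ncard_compl, ← Nat.card_coe_set_eq, ← card_mul_index A, hA]
  change Nat.card A * 2 - Nat.card A = Nat.card A
  omega

theorem card_cyclicSubgroups_of_forall_sq_eq_one (hA : (zpowers a).index = 2)
    (hinv : ∀ g ∉ zpowers a, g ^ 2 = 1) :
    Nat.card {K : Subgroup G // IsCyclic K} = (orderOf a).divisors.card + orderOf a := by
  have hinj : Set.InjOn zpowers (zpowers a : Set G)ᶜ := zpowers_injOn_sq_eq_one.mono hinv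
  rw [card_cyclicSubgroups_eq a, hinj.ncard_image, ncard_compl_of_index_two hA, Nat.card_zpowers]

theorem card_cyclicSubgroups_lt_of_sq_ne_one (hA : (zpowers a).index = 2) {g : G}
    (hg : g ∉ zpowers a) (hg2 : g ^ 2 ≠ 1) :
    Nat.card {K : Subgroup G // IsCyclic K} < (orderOf a).divisors.card + orderOf a := by
  rw [card_cyclicSubgroups_eq a, ← Nat.card_zpowers, ← ncard_compl_of_index_two hA]
  exact Nat.add_lt_add_left
    (ncard_image_zpowers_lt (Set.toFinite _) hg (inv_mem_iff.not.mpr hg) hg2) _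

theorem two_mul_card_cyclicSubgroups_le_of_forall_sq_ne_one (hA : (zpowers a).index = 2)
    (hinv : ∀ g ∉ zpowers a, g ^ 2 ≠ 1) :
    2 * Nat.card {K : Subgroup G // IsCyclic K} ≤ 2 * (orderOf a).divisors.card + orderOf a := by
  rw [card_cyclicSubgroups_eq a, ← Nat.card_zpowers, ← ncard_compl_of_index_two hA, mul_add]
  exact Nat.add_le_add_left
    (two_mul_ncard_image_zpowers_le (Set.toFinite _) (fun g hg => inv_mem_iff.not.mpr hg) hinv) _

end Finite

end IndexTwo

theorem card_cyclicSubgroups_dihedralGroup (n : ℕ) [NeZero n] :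
    Nat.card {K : Subgroup (DihedralGroup n) // IsCyclic K} = n.divisors.card + n := by
  have hord : orderOf (DihedralGroup.r 1 : DihedralGroup n) = n := DihedralGroup.orderOf_r_one
  have hA : (zpowers (DihedralGroup.r 1 : DihedralGroup n)).index = 2 := by
    have h := card_mul_index (zpowers (DihedralGroup.r 1 : DihedralGroup n))
    rw [Nat.card_zpowers, hord, DihedralGroup.nat_card, mul_comm 2] at h
    exact Nat.eq_of_mul_eq_mul_left (Nat.pos_of_ne_zero (NeZero.ne n)) h
  refine (card_cyclicSubgroups_of_forall_sq_eq_one hA ?_).trans (by rw [hord])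
  rintro (i | i) hi
  · refine absurd ?_ hi
    rw [← ZMod.natCast_zmod_val i, ← DihedralGroup.r_one_pow]
    exact pow_mem (mem_zpowers _) _
  · exact (pow_two _).trans (DihedralGroup.sr_mul_self i)

theorem alpha_dihedralGroup_eight : alpha (DihedralGroup 8) = 3 / 4 := by
  unfold alpha
  rw [card_cyclicSubgroups_dihedralGroup, DihedralGroup.nat_card]
  norm_num [show (Nat.divisors 8).card = 4 by decide]

theorem eq_two_or_eq_three_of_two_pow_le {m : ℕ} (hm : 2 ≤ m) (h : 2 ^ m ≤ 2 * m + 2) :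
    m = 2 ∨ m = 3 := by
  by_contra! hne
  obtain ⟨k, rfl⟩ : ∃ k, m = k + 4 := ⟨m - 4, by omega⟩
  have := Nat.lt_two_pow_self (n := k)
  rw [pow_add] at h
  omega

/-- Among finite non-abelian 2-groups with a cyclic maximal subgroup (a cyclic subgroup
of index 2), the dihedral group `D_16 = DihedralGroup 8` is the only one with `α = 3/4`. -/
theorem stmt_19 (G : Type*) [Group G] [Finite G] (n : ℕ) (hn : 3 ≤ n)
    (hcard : Nat.card G = 2 ^ n) (hnab : ∃ a b : G, a * b ≠ b * a)
    (hmax : ∃ H : Subgroup G, IsCyclic H ∧ H.index = 2) :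
    alpha G = 3 / 4 ↔ Nonempty (G ≃* DihedralGroup 8) := by
  obtain ⟨A, hAcyc, hA⟩ := hmax
  obtain ⟨a, rfl⟩ := A.isCyclic_iff_exists_zpowers_eq_top.mp hAcyc
  obtain ⟨m, rfl⟩ : ∃ m, n = m + 1 := ⟨n - 1, by omega⟩
  have horder : orderOf a = 2 ^ m := by
    have h := card_mul_index (zpowers a)
    rw [hA, Nat.card_zpowers, hcard, pow_succ] at h
    exact Nat.eq_of_mul_eq_mul_right (by norm_num) h
  have hdiv : (orderOf a).divisors.card = m + 1 := by
    rw [horder, Nat.divisors_prime_pow Nat.prime_two, Finset.card_map, Finset.card_range]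
  have halpha : alpha G = 3 / 4 ↔ 2 * Nat.card {K : Subgroup G // IsCyclic K} = 3 * 2 ^ m := by
    unfold alpha
    rw [hcard, div_eq_div_iff (by positivity) (by norm_num), pow_succ]
    norm_cast
    omega
  rw [halpha]
  constructor
  · intro h
    by_cases hinv : ∀ g ∉ zpowers a, g ^ 2 = 1
    · rw [card_cyclicSubgroups_of_forall_sq_eq_one hA hinv, hdiv, horder] at h
      obtain rfl | rfl := eq_two_or_eq_three_of_two_pow_le (m := m) (by omega) (by omega)
      · omega
      · have hD := nonempty_mulEquiv_dihedralGroup hA hinv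
        rwa [horder] at hD
    · push Not at hinv
      obtain ⟨g, hg, hg2⟩ := hinv
      have hlt := card_cyclicSubgroups_lt_of_sq_ne_one hA hg hg2
      rw [hdiv, horder] at hlt
      obtain rfl | rfl := eq_two_or_eq_three_of_two_pow_le (m := m) (by omega) (by omega)
      · have hle := two_mul_card_cyclicSubgroups_le_of_forall_sq_ne_one hA
          (forall_sq_ne_one_of_orderOf_eq_four hA horder hnab hg hg2)
        rw [hdiv, horder] at hle
        omega
      · omega
  · rintro ⟨e⟩
    rw [← halpha, alpha_congr e, alpha_dihedralGroup_eight]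
end
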